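/- arXiv:1003.1189 — 5 statements merged into one kernel-verified Lean document; each statement's English description precedes it below -/
import Mathlib

section
/- Let P_X be a probability measure on 𝒳, let φ₁,…,φ_M ∈ L²(𝒳,P_X) satisfy ‖φ_j‖_{P_X,2} = 1 for all j, let f ∈ L²(𝒳,P_X), and let λ^C be a minimizer of λ ↦ ‖f_λ − f‖²_{P_X,2} over {λ ∈ ℝ^M : ‖λ‖₁ ≤ 1}. Then for every integer s ≥ 1 with ‖λ^C‖₀ ≥ 1: inf over {λ : ‖λ‖₁ ≤ 1, ‖λ‖₀ ≤ s} of ‖f_λ − f‖²_{P_X,2} ≤ ‖f_{λ^C} − f‖²_{P_X,2} + ‖λ^C‖₁² / min(s, ‖λ^C‖₀). -/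
/-!
Maurey's empirical method. Write `L = ‖λ‖₁` and `λ = L ∑ⱼ pⱼ sign(λⱼ) eⱼ` with the probability
weights `pⱼ = |λⱼ| / L`. Averaging `m` independent draws of `L sign(λⱼ) eⱼ`, `j ∼ p`, gives a random
vector with at most `m` nonzero coordinates and `ℓ₁`-norm at most `L`, whose mean is `λ`. At each
point the expected squared error of `f_λ̂` is that of `f_λ` plus the variance of the sample mean,
which is at most `L² ∑ⱼ pⱼ φⱼ(x)² / m`; integrating, and using `‖φⱼ‖ ≤ 1`, the expected error is at
most `‖f_λ - f‖² + L² / m`, so some draw does at least as well.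
-/

open MeasureTheory ProbabilityTheory

theorem integral_sq_sampleMean_sub {E : Type*} [MeasurableSpace E] {ν : Measure E}
    [IsProbabilityMeasure ν] {g : E → ℝ} (hg : MemLp g 2 ν) {m : ℕ} (hm : m ≠ 0) (a : ℝ) :
    ∫ ω, ((m : ℝ)⁻¹ * ∑ i, g (ω i) - a) ^ 2 ∂Measure.pi (fun _ : Fin m => ν)
      = (ν[g] - a) ^ 2 + Var[g; ν] / m := by
  set π := Measure.pi fun _ : Fin m => ν
  have heval (i : Fin m) : MeasurePreserving (Function.eval i) π ν := measurePreserving_eval _ i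
  have hcoord (i : Fin m) : MemLp (fun ω : Fin m → E => g (ω i)) 2 π :=
    hg.comp_measurePreserving (heval i)
  set Y : (Fin m → E) → ℝ := fun ω => (m : ℝ)⁻¹ * ∑ i, g (ω i)
  have hY : MemLp Y 2 π := (memLp_finsetSum _ fun i _ => hcoord i).const_mul _
  have hmean : π[Y] = ν[g] := by
    have (i : Fin m) : ∫ ω, g (ω i) ∂π = ν[g] := integral_comp_eval hg.aestronglyMeasurable
    rw [integral_const_mul, integral_finsetSum _ fun i _ => (hcoord i).integrable one_le_two]
    simp [this, hm]
  have hvar : Var[Y; π] = Var[g; ν] / m := by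
    have hsum := IndepFun.variance_sum (s := Finset.univ) (fun i _ => hcoord i)
      fun i _ j _ hij => (iIndepFun_pi (X := fun _ => g) fun _ => hg.aemeasurable).indepFun hij
    simp only [Finset.sum_fn, fun i => (heval i).variance_fun_comp hg.aemeasurable] at hsum
    simp only [Y, variance_const_mul, hsum, Finset.sum_const, Finset.card_univ, Fintype.card_fin,
      nsmul_eq_mul]
    field_simp
  calc ∫ ω, (Y ω - a) ^ 2 ∂π = Var[fun ω => Y ω - a; π] + π[fun ω => Y ω - a] ^ 2 := by
        rw [variance_eq_sub (X := fun ω => Y ω - a) (hY.sub (memLp_const a)), sub_add_cancel]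
        rfl
    _ = (ν[g] - a) ^ 2 + Var[g; ν] / m := by
        rw [variance_sub_const hY.aestronglyMeasurable, hvar,
          integral_sub (hY.integrable one_le_two) (integrable_const a), hmean]
        simp only [integral_const, probReal_univ, smul_eq_mul, one_mul]
        ring

theorem integral_sq_sampleMean_sub_le {E : Type*} [MeasurableSpace E] {ν : Measure E}
    [IsProbabilityMeasure ν] {g : E → ℝ} (hg : MemLp g 2 ν) {m : ℕ} (hm : m ≠ 0) (a : ℝ) :
    ∫ ω, ((m : ℝ)⁻¹ * ∑ i, g (ω i) - a) ^ 2 ∂Measure.pi (fun _ : Fin m => ν)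
      ≤ (ν[g] - a) ^ 2 + ν[g ^ 2] / m := by
  rw [integral_sq_sampleMean_sub hg hm]
  gcongr
  exact variance_le_expectation_sq hg.aestronglyMeasurable

section FiniteSwap
variable {Ω X : Type*} [Fintype Ω] [MeasurableSpace Ω] [MeasurableSingletonClass Ω]
  [MeasurableSpace X] {π : Measure Ω} [IsFiniteMeasure π] {μ : Measure X} {G : Ω → X → ℝ}

theorem integral_fintype_eq_sum_measureReal_mul (g : Ω → ℝ) :
    ∫ ω, g ω ∂π = ∑ ω, π.real {ω} * g ω := by
  simp [integral_fintype (f := g) .of_finite]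

theorem integrable_integral_of_fintype (hG : ∀ ω, Integrable (G ω) μ) :
    Integrable (fun x => ∫ ω, G ω x ∂π) μ := by
  simp only [integral_fintype_eq_sum_measureReal_mul]
  exact integrable_finsetSum _ fun ω _ => (hG ω).const_mul _

theorem integral_integral_swap_of_fintype (hG : ∀ ω, Integrable (G ω) μ) :
    ∫ ω, ∫ x, G ω x ∂μ ∂π = ∫ x, ∫ ω, G ω x ∂π ∂μ := by
  simp only [integral_fintype_eq_sum_measureReal_mul]
  rw [integral_finsetSum _ fun ω _ => (hG ω).const_mul _]
  simp [integral_const_mul]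

theorem exists_integral_le_of_forall_integral_le [IsProbabilityMeasure π] {B : X → ℝ}
    (hG : ∀ ω, Integrable (G ω) μ) (hB : Integrable B μ) (hle : ∀ x, ∫ ω, G ω x ∂π ≤ B x) :
    ∃ ω, ∫ x, G ω x ∂μ ≤ ∫ x, B x ∂μ := by
  obtain ⟨ω, hω⟩ := exists_le_integral (μ := π) (f := fun ω => ∫ x, G ω x ∂μ) .of_finite
  refine ⟨ω, hω.trans ?_⟩
  rw [integral_integral_swap_of_fintype hG]
  exact integral_mono (integrable_integral_of_fintype hG) hB hle

end FiniteSwap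

theorem exists_sample_integral_sq_sub_le {ι X : Type*} [Fintype ι] [MeasurableSpace ι]
    [DiscreteMeasurableSpace ι] [MeasurableSpace X] (ν : Measure ι) [IsProbabilityMeasure ν]
    {μ : Measure X} {G : ι → X → ℝ} {F : X → ℝ} {m : ℕ} (hm : m ≠ 0)
    (hsample : ∀ ω : Fin m → ι, Integrable (fun x => ((m : ℝ)⁻¹ * ∑ i, G (ω i) x - F x) ^ 2) μ)
    (hmean : Integrable (fun x => (∫ j, G j x ∂ν - F x) ^ 2) μ)
    (hG : ∀ j, Integrable (fun x => G j x ^ 2) μ) :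
    ∃ ω : Fin m → ι, ∫ x, ((m : ℝ)⁻¹ * ∑ i, G (ω i) x - F x) ^ 2 ∂μ
      ≤ ∫ x, (∫ j, G j x ∂ν - F x) ^ 2 ∂μ + (∫ j, ∫ x, G j x ^ 2 ∂μ ∂ν) / m := by
  have hvar : Integrable (fun x => (∫ j, G j x ^ 2 ∂ν) / m) μ :=
    (integrable_integral_of_fintype hG).div_const _
  have hpoint (x : X) :=
    integral_sq_sampleMean_sub_le (ν := ν) (g := fun j => G j x) .of_discrete hm (F x)
  obtain ⟨ω, hω⟩ := exists_integral_le_of_forall_integral_le (π := Measure.pi fun _ : Fin m => ν)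
    (G := fun ω x => ((m : ℝ)⁻¹ * ∑ i, G (ω i) x - F x) ^ 2)
    (B := fun x => (∫ j, G j x ∂ν - F x) ^ 2 + (∫ j, G j x ^ 2 ∂ν) / m) hsample
    (hmean.add hvar) hpoint
  refine ⟨ω, hω.trans_eq ?_⟩
  rw [integral_add hmean hvar, integral_div, integral_integral_swap_of_fintype hG]

section EmpiricalVector
variable {ι : Type*} [Fintype ι] [DecidableEq ι] {m : ℕ} (ω : Fin m → ι) (v : ι → ℝ)

theorem sum_card_fiber_mul (h : ι → ℝ) :
    ∑ j, ((Finset.univ.filter fun i => ω i = j).card : ℝ) * h j = ∑ i, h (ω i) := by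
  simp_rw [← nsmul_eq_mul, ← Finset.sum_const]
  exact Finset.sum_fiberwise' _ ω h

/-- `m⁻¹ ∑ᵢ v (ω i) • e (ω i)`, the average of the sampled coordinate vectors. -/
noncomputable def empiricalVector (j : ι) : ℝ :=
  (Finset.univ.filter fun i => ω i = j).card / m * v j

theorem sum_empiricalVector_mul (φ : ι → ℝ) :
    ∑ j, empiricalVector ω v j * φ j = (m : ℝ)⁻¹ * ∑ i, v (ω i) * φ (ω i) := by
  rw [← sum_card_fiber_mul ω fun j => v j * φ j, Finset.mul_sum]
  exact Finset.sum_congr rfl fun j _ => by rw [empiricalVector]; ring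

theorem sum_abs_empiricalVector_le (hm : m ≠ 0) {C : ℝ} (hv : ∀ j, |v j| ≤ C) :
    ∑ j, |empiricalVector ω v j| ≤ C :=
  calc ∑ j, |empiricalVector ω v j| = (m : ℝ)⁻¹ * ∑ i, |v (ω i)| := by
        rw [← sum_card_fiber_mul ω fun j => |v j|, Finset.mul_sum]
        refine Finset.sum_congr rfl fun j _ => ?_
        rw [empiricalVector, abs_mul, abs_of_nonneg (by positivity)]
        ring
    _ ≤ (m : ℝ)⁻¹ * ∑ _i : Fin m, C := by gcongr with i; exact hv (ω i)
    _ = C := by simp [hm]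

theorem card_support_empiricalVector_le :
    (Finset.univ.filter fun j => empiricalVector ω v j ≠ 0).card ≤ m := by
  calc _ ≤ (Finset.univ.image ω).card := Finset.card_le_card fun j hj => ?_
    _ ≤ m := Finset.card_image_le.trans_eq (Finset.card_fin m)
  obtain ⟨i, hi⟩ : ∃ i, ω i = j := by
    by_contra! h
    simp [empiricalVector, h] at hj
  exact Finset.mem_image.2 ⟨i, Finset.mem_univ i, hi⟩

end EmpiricalVector

theorem exists_isProbabilityMeasure_integral_eq_sum {ι : Type*} [Fintype ι] [MeasurableSpace ι]
    [MeasurableSingletonClass ι] (p : ι → ℝ) (hp : ∀ j, 0 ≤ p j) (hp1 : ∑ j, p j = 1) :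
    ∃ ν : Measure ι, IsProbabilityMeasure ν ∧ ∀ g : ι → ℝ, ∫ j, g j ∂ν = ∑ j, p j * g j := by
  have hsum : ∑ j, ENNReal.ofReal (p j) = 1 := by
    rw [← ENNReal.ofReal_sum_of_nonneg fun j _ => hp j, hp1, ENNReal.ofReal_one]
  refine ⟨(PMF.ofFintype _ hsum).toMeasure, inferInstance, fun g => ?_⟩
  simp [PMF.integral_eq_sum, ENNReal.toReal_ofReal (hp _)]

theorem abs_sign_le_one {α : Type*} [Ring α] [LinearOrder α] [IsStrictOrderedRing α] (x : α) :
    |(SignType.sign x : α)| ≤ 1 := by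
  rcases SignType.sign x with _ | _ | _ <;> simp

theorem exists_sparse_integral_sq_sub_le {ι X : Type*} [Fintype ι] [MeasurableSpace X]
    {μ : Measure X} {φ : ι → X → ℝ} {f : X → ℝ}
    (hφ : ∀ j, Integrable (fun x => φ j x ^ 2) μ) (hφ1 : ∀ j, ∫ x, φ j x ^ 2 ∂μ ≤ 1)
    (hint : ∀ l : ι → ℝ, Integrable (fun x => (∑ j, l j * φ j x - f x) ^ 2) μ)
    (lam : ι → ℝ) {m : ℕ} (hm : m ≠ 0) :
    ∃ l : ι → ℝ, ∑ j, |l j| ≤ ∑ j, |lam j| ∧ (Finset.univ.filter fun j => l j ≠ 0).card ≤ m ∧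
      ∫ x, (∑ j, l j * φ j x - f x) ^ 2 ∂μ
        ≤ ∫ x, (∑ j, lam j * φ j x - f x) ^ 2 ∂μ + (∑ j, |lam j|) ^ 2 / m := by
  classical
  let _ : MeasurableSpace ι := ⊤
  set L := ∑ j, |lam j|
  rcases (Finset.sum_nonneg fun j _ => abs_nonneg (lam j) : 0 ≤ L).eq_or_lt with hL | hL
  · have hlam : lam = 0 := funext fun j => abs_eq_zero.1 <|
      (Finset.sum_eq_zero_iff_of_nonneg fun j _ => abs_nonneg _).1 hL.symm j (Finset.mem_univ j)
    exact ⟨lam, le_rfl, by simp [hlam], le_add_of_nonneg_right (by positivity)⟩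
  obtain ⟨ν, _, hν⟩ := exists_isProbabilityMeasure_integral_eq_sum (fun j => |lam j| / L)
    (fun j => by positivity) (by rw [← Finset.sum_div, div_self hL.ne'])
  set v : ι → ℝ := fun j => L * SignType.sign (lam j)
  have hv (j : ι) : |v j| ≤ L := by
    rw [abs_mul, abs_of_pos hL]
    exact mul_le_of_le_one_right hL.le (abs_sign_le_one _)
  have hmean (x : X) : ∫ j, v j * φ j x ∂ν = ∑ j, lam j * φ j x := by
    refine (hν _).trans (Finset.sum_congr rfl fun j _ => ?_)
    conv_rhs => rw [← sign_mul_abs (lam j)]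
    rw [div_mul_eq_mul_div, div_eq_iff hL.ne']
    ring
  have hG (j : ι) : ∫ x, (v j * φ j x) ^ 2 ∂μ ≤ L ^ 2 := by
    simp only [mul_pow, integral_const_mul]
    have hvL : v j ^ 2 ≤ L ^ 2 := sq_le_sq.2 ((hv j).trans_eq (abs_of_pos hL).symm)
    calc v j ^ 2 * ∫ x, φ j x ^ 2 ∂μ ≤ L ^ 2 * 1 :=
          mul_le_mul hvL (hφ1 j) (by positivity) (sq_nonneg L)
      _ = L ^ 2 := mul_one _
  obtain ⟨ω, hω⟩ := exists_sample_integral_sq_sub_le ν hm (G := fun j x => v j * φ j x) (F := f)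
    (fun ω => by simpa only [sum_empiricalVector_mul] using hint (empiricalVector ω v))
    (by simpa only [hmean] using hint lam)
    (fun j => ((hφ j).const_mul (v j ^ 2)).congr (by simp [mul_pow]))
  refine ⟨empiricalVector ω v, sum_abs_empiricalVector_le ω v hm hv,
    card_support_empiricalVector_le ω v, ?_⟩
  have hGν : ∫ j, ∫ x, (v j * φ j x) ^ 2 ∂μ ∂ν ≤ L ^ 2 :=
    (integral_mono .of_finite (integrable_const _) hG).trans_eq (by simp)
  simp only [hmean] at hω
  simp only [sum_empiricalVector_mul]
  exact hω.trans (by gcongr)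

theorem maurey_sparse_approximation_general
    {X : Type} [MeasurableSpace X]
    (M : ℕ) (PX : Measure X)
    (f : X → ℝ)
    (φ : Fin M → X → ℝ)
    (hφ2 : ∀ j, Integrable (fun x => φ j x ^ 2) PX)
    (hφnorm : ∀ j, (∫ x, φ j x ^ 2 ∂PX) = 1)
    (flam : (Fin M → ℝ) → X → ℝ)
    (hflam : ∀ l x, flam l x = ∑ j, l j * φ j x)
    (hint : ∀ l : Fin M → ℝ, Integrable (fun x => (flam l x - f x) ^ 2) PX)
    (lC : Fin M → ℝ) (hlC1 : (∑ j, |lC j|) ≤ 1)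
    (s : ℕ) (hs : 1 ≤ s)
    (h0 : 1 ≤ (Finset.univ.filter fun j => lC j ≠ 0).card) :
    sInf {r : ℝ | ∃ l : Fin M → ℝ, (∑ j, |l j|) ≤ 1 ∧
        (Finset.univ.filter fun j => l j ≠ 0).card ≤ s ∧
        r = ∫ x, (flam l x - f x) ^ 2 ∂PX} ≤
      (∫ x, (flam lC x - f x) ^ 2 ∂PX) +
        (∑ j, |lC j|) ^ 2 /
          min (s : ℝ) (((Finset.univ.filter fun j => lC j ≠ 0).card : ℕ) : ℝ) := by
  have hint_sum (l : Fin M → ℝ) : Integrable (fun x => (∑ j, l j * φ j x - f x) ^ 2) PX := by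
    simpa only [hflam] using hint l
  obtain ⟨l, hl1, hl0, hle⟩ := exists_sparse_integral_sq_sub_le hφ2 (fun j => (hφnorm j).le)
    hint_sum lC (Nat.one_le_iff_ne_zero.mp (le_min hs h0))
  refine csInf_le_of_le ⟨0, ?_⟩ ⟨l, hl1.trans hlC1, hl0.trans (min_le_left _ _), rfl⟩ ?_
  · rintro r ⟨l, -, -, rfl⟩
    exact integral_nonneg fun x => sq_nonneg _
  · simpa only [hflam, Nat.cast_min] using hle

/-- Maurey argument: If `λ^C` minimizes `λ ↦ ‖f_λ − f‖²_{P_X,2}` over the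
ℓ₁-ball of radius 1, then for every integer `s ≥ 1` (and `‖λ^C‖₀ ≥ 1`),
`inf { ‖f_λ − f‖²_{P_X,2} : ‖λ‖₁ ≤ 1, ‖λ‖₀ ≤ s } ≤
  ‖f_{λ^C} − f‖²_{P_X,2} + ‖λ^C‖₁² / min(s, ‖λ^C‖₀)`. -/
theorem maurey_sparse_approximation
    {X : Type} [MeasurableSpace X]
    (M : ℕ) (PX : Measure X) [IsProbabilityMeasure PX]
    (f : X → ℝ) (hf2 : Integrable (fun x => f x ^ 2) PX)
    (φ : Fin M → X → ℝ)
    (hφ2 : ∀ j, Integrable (fun x => φ j x ^ 2) PX)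
    (hφnorm : ∀ j, (∫ x, φ j x ^ 2 ∂PX) = 1)
    (flam : (Fin M → ℝ) → X → ℝ)
    (hflam : ∀ l x, flam l x = ∑ j, l j * φ j x)
    (hint : ∀ l : Fin M → ℝ, Integrable (fun x => (flam l x - f x) ^ 2) PX)
    (lC : Fin M → ℝ) (hlC1 : (∑ j, |lC j|) ≤ 1)
    (hlCmin : ∀ l : Fin M → ℝ, (∑ j, |l j|) ≤ 1 →
      (∫ x, (flam lC x - f x) ^ 2 ∂PX) ≤ ∫ x, (flam l x - f x) ^ 2 ∂PX)
    (s : ℕ) (hs : 1 ≤ s)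
    (h0 : 1 ≤ (Finset.univ.filter fun j => lC j ≠ 0).card) :
    sInf {r : ℝ | ∃ l : Fin M → ℝ, (∑ j, |l j|) ≤ 1 ∧
        (Finset.univ.filter fun j => l j ≠ 0).card ≤ s ∧
        r = ∫ x, (flam l x - f x) ^ 2 ∂PX} ≤
      (∫ x, (flam lC x - f x) ^ 2 ∂PX) +
        (∑ j, |lC j|) ^ 2 /
          min (s : ℝ) (((Finset.univ.filter fun j => lC j ≠ 0).card : ℕ) : ℝ) :=
  maurey_sparse_approximation_general M PX f φ hφ2 hφnorm flam hflam hint lC hlC1 s hs h0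
end

section
/- In the binary classification model, let Φ : ℝ → [0,∞) be convex and twice continuously differentiable with β_Φ := sup_{|u| ≤ RL_φ} Φ′(u)²/Φ″(u) < ∞ (with the convention 0/0 = 0), and assume max_j ‖φ_j‖_{P_X,∞} ≤ L_φ. Then for every β ≥ β_Φ and every fixed g̃ ∈ ℱ_Λ, the map g ↦ ∫_{𝒳×{±1}} exp( −β⁻¹{ Φ(−y g(x)) − Φ(−y g̃(x)) } ) P(dx,dy) is concave on the convex set ℱ_Λ; in particular Assumption Q2 holds with Ψ_β(g,g̃) equal to this integral. -/
open MeasureTheory Set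

/-! The second derivative of `exp (-Φ / β)` is `exp (-Φ / β) (Φ'² - β Φ'') / β²`, so the condition
`Φ'² ≤ β Φ''` on `[-R L_φ, R L_φ]` makes `t ↦ exp (-Φ t / β)` concave there. Every `g ∈ ℱ_Λ`
satisfies `|g| ≤ R L_φ` almost surely, so for almost every `(x, y)` the integrand is a positive
multiple of this concave function composed with the linear map `g ↦ -y g(x)`, hence concave on
`ℱ_Λ`; integrating preserves concavity. -/

lemma concaveOn_exp_neg_div_of_sq_deriv_le {Φ : ℝ → ℝ} {β : ℝ} (hβ : 0 < β) {s : Set ℝ}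
    (hs : Convex ℝ s) (hΦ : Differentiable ℝ Φ) (hΦ' : Differentiable ℝ (deriv Φ))
    (hβΦ : ∀ u ∈ s, deriv Φ u ^ 2 ≤ β * deriv (deriv Φ) u) :
    ConcaveOn ℝ s fun t => Real.exp (-Φ t / β) := by
  set h := fun t => Real.exp (-Φ t / β)
  have hd : ∀ t, HasDerivAt h (h t * (-deriv Φ t / β)) t := fun t =>
    ((hΦ t).hasDerivAt.neg.div_const β).exp
  have hd2 : ∀ t, HasDerivAt (fun t => h t * (-deriv Φ t / β))
      (h t * (-deriv Φ t / β) * (-deriv Φ t / β) + h t * (-deriv (deriv Φ) t / β)) t :=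
    fun t => (hd t).mul ((hΦ' t).hasDerivAt.neg.div_const β)
  refine concaveOn_of_hasDerivWithinAt2_nonpos hs
    (fun t _ => (hd t).continuousAt.continuousWithinAt) (fun t _ => (hd t).hasDerivWithinAt)
    (fun t _ => (hd2 t).hasDerivWithinAt) fun t ht => ?_
  have hsecond : h t * (-deriv Φ t / β) * (-deriv Φ t / β) + h t * (-deriv (deriv Φ) t / β)
      = h t / β ^ 2 * (deriv Φ t ^ 2 - β * deriv (deriv Φ) t) := by
    field_simp
    ring
  rw [hsecond]
  exact mul_nonpos_of_nonneg_of_nonpos (by positivity)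
    (sub_nonpos.2 (hβΦ t (interior_subset ht)))

section Dictionary

variable {ι X : Type*} [Fintype ι]

lemma convexOn_sum_abs : ConvexOn ℝ univ fun l : ι → ℝ => ∑ j, |l j| := by
  refine ⟨convex_univ, fun l _ l' _ a b ha hb _ => ?_⟩
  simp only [Pi.add_apply, Pi.smul_apply, smul_eq_mul, Finset.mul_sum, ← Finset.sum_add_distrib]
  gcongr with j
  calc |a * l j + b * l' j| ≤ |a * l j| + |b * l' j| := abs_add_le _ _
    _ = a * |l j| + b * |l' j| := by rw [abs_mul, abs_mul, abs_of_nonneg ha, abs_of_nonneg hb]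

def dictionaryClass (φ : ι → X → ℝ) (R : ℝ) : Set (X → ℝ) :=
  Fintype.linearCombination ℝ φ '' {l | ∑ j, |l j| ≤ R}

variable {φ : ι → X → ℝ} {R : ℝ}

lemma convex_dictionaryClass : Convex ℝ (dictionaryClass φ R) := by
  have := (convexOn_sum_abs (ι := ι)).convex_le R
  simp only [mem_univ, true_and] at this
  exact this.linear_image _

lemma abs_le_of_mem_dictionaryClass {g : X → ℝ} (hg : g ∈ dictionaryClass φ R) {L : ℝ}
    (hL : 0 ≤ L) {x : X} (hx : ∀ j, |φ j x| ≤ L) : |g x| ≤ R * L := by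
  obtain ⟨l, hl, rfl⟩ := hg
  simp only [Fintype.linearCombination_apply, Finset.sum_apply, Pi.smul_apply, smul_eq_mul]
  calc |∑ j, l j * φ j x| ≤ ∑ j, |l j| * L := by
        refine (Finset.abs_sum_le_sum_abs _ _).trans (Finset.sum_le_sum fun j _ => ?_)
        rw [abs_mul]
        exact mul_le_mul_of_nonneg_left (hx j) (abs_nonneg _)
    _ ≤ R * L := by rw [← Finset.sum_mul]; exact mul_le_mul_of_nonneg_right hl hL

lemma measurable_of_mem_dictionaryClass [MeasurableSpace X] (hφ : ∀ j, Measurable (φ j))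
    {g : X → ℝ} (hg : g ∈ dictionaryClass φ R) : Measurable g := by
  obtain ⟨l, -, rfl⟩ := hg
  rw [Fintype.linearCombination_apply, Finset.sum_fn]
  exact Finset.measurable_sum _ fun j _ => (hφ j).const_smul (l j)

end Dictionary

theorem concaveOn_integral_exp_neg_loss_sub {X : Type*} [MeasurableSpace X]
    {P : Measure (X × ℝ)} [IsFiniteMeasure P] {F : Set (X → ℝ)} (hF : Convex ℝ F)
    (hmeas : ∀ g ∈ F, Measurable g) {s : Set ℝ} (hs : IsCompact s)
    (hmargin : ∀ᵐ z ∂P, ∀ g ∈ F, -z.2 * g z.1 ∈ s) {Φ : ℝ → ℝ} (hΦ : Continuous Φ) {β : ℝ}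
    (hconc : ConcaveOn ℝ s fun t => Real.exp (-Φ t / β)) {g' : X → ℝ} (hg' : g' ∈ F) :
    ConcaveOn ℝ F fun g => ∫ z, Real.exp (-(Φ (-z.2 * g z.1) - Φ (-z.2 * g' z.1)) / β) ∂P := by
  obtain ⟨C, hC⟩ := (hs.prod hs).exists_bound_of_continuousOn
    (f := fun p : ℝ × ℝ => Real.exp (-(Φ p.1 - Φ p.2) / β)) (by fun_prop)
  refine integral_concaveOn_of_integrand_ae hF ?_ fun g hg => ?_
  · filter_upwards [hmargin] with z hz
    have hcomp : ConcaveOn ℝ F fun g => Real.exp (-Φ (-z.2 * g z.1) / β) :=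
      (hconc.comp_linearMap ((-z.2) • LinearMap.proj (R := ℝ) (φ := fun _ : X => ℝ) z.1)).subset
        (fun g hg => hz g hg) hF
    have hfactor : (fun g : X → ℝ => Real.exp (-(Φ (-z.2 * g z.1) - Φ (-z.2 * g' z.1)) / β))
        = fun g : X → ℝ => Real.exp (Φ (-z.2 * g' z.1) / β) • Real.exp (-Φ (-z.2 * g z.1) / β) := by
      funext g
      rw [smul_eq_mul, ← Real.exp_add]
      ring_nf
    rw [hfactor]
    exact hcomp.smul (Real.exp_pos _).le
  · have hgm := hmeas g hg
    have hg'm := hmeas g' hg'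
    refine Integrable.of_bound (by fun_prop) C ?_
    filter_upwards [hmargin] with z hz
    exact hC (_, _) ⟨hz g hg, hz g' hg'⟩

theorem classification_Q2_concavity_general
    {X : Type} [MeasurableSpace X]
    (M : ℕ) (R : ℝ)
    (P : Measure (X × ℝ)) [IsProbabilityMeasure P]
    (hlabels : ∀ᵐ z ∂P, z.2 = 1 ∨ z.2 = -1)
    (PX : Measure X) (hPX : PX = P.map Prod.fst)
    (φ : Fin M → X → ℝ) (hφmeas : ∀ j, Measurable (φ j))
    (Lφ : ℝ) (hLφ : 0 < Lφ)
    (hφbound : ∀ j, ∀ᵐ x ∂PX, |φ j x| ≤ Lφ)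
    (flam : (Fin M → ℝ) → X → ℝ)
    (hflam : ∀ (l : Fin M → ℝ) (x : X), flam l x = ∑ j, l j * φ j x)
    -- the convex dictionary class ℱ_Λ
    (FΛ : Set (X → ℝ))
    (hFΛ : FΛ = {g | ∃ l : Fin M → ℝ, (∑ j, |l j|) ≤ R ∧ g = flam l})
    -- the loss Φ
    (Φ : ℝ → ℝ)
    (hΦsmooth : ContDiff ℝ 2 Φ)
    (β : ℝ) (hβpos : 0 < β)
    (hβΦ : ∀ u : ℝ, |u| ≤ R * Lφ → deriv Φ u ^ 2 ≤ β * deriv (deriv Φ) u)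
    (Ψ : (X → ℝ) → (X → ℝ) → ℝ)
    (hΨ : ∀ g g' : X → ℝ, Ψ g g' =
      ∫ z, Real.exp (-(Φ (-z.2 * g z.1) - Φ (-z.2 * g' z.1)) / β) ∂P) :
    (∀ g' ∈ FΛ, ConcaveOn ℝ FΛ fun g => Ψ g g') ∧
    (∀ g ∈ FΛ, Ψ g g = 1) ∧
    (∀ g ∈ FΛ, ∀ g' ∈ FΛ,
      (∫ z, Real.exp (-(Φ (-z.2 * g z.1) - Φ (-z.2 * g' z.1)) / β) ∂P) ≤ Ψ g g') := by
  have hF : FΛ = dictionaryClass φ R := by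
    ext g
    simp [hFΛ, dictionaryClass, funext_iff, hflam, Fintype.linearCombination_apply, eq_comm]
  subst hF hPX
  have hdict : ∀ᵐ z ∂P, ∀ j, |φ j z.1| ≤ Lφ :=
    ae_all_iff.2 fun j => ae_of_ae_map measurable_fst.aemeasurable (hφbound j)
  have hmargin :
      ∀ᵐ z ∂P, ∀ g ∈ dictionaryClass φ R, -z.2 * g z.1 ∈ Icc (-(R * Lφ)) (R * Lφ) := by
    filter_upwards [hlabels, hdict] with z hy hz g hg
    have hy' : |z.2| = 1 := by rcases hy with h | h <;> simp [h]
    rw [mem_Icc, ← abs_le, abs_mul, abs_neg, hy', one_mul]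
    exact abs_le_of_mem_dictionaryClass hg hLφ.le hz
  have hconc : ConcaveOn ℝ (Icc (-(R * Lφ)) (R * Lφ)) fun t => Real.exp (-Φ t / β) :=
    concaveOn_exp_neg_div_of_sq_deriv_le hβpos (convex_Icc _ _)
      (hΦsmooth.differentiable (by norm_num)) hΦsmooth.differentiable_deriv_two
      fun u hu => hβΦ u (abs_le.2 hu)
  refine ⟨fun g' hg' => ?_, fun g _ => by simp [hΨ], fun g _ g' _ => (hΨ g g').ge⟩
  simp only [hΨ]
  exact concaveOn_integral_exp_neg_loss_sub convex_dictionaryClass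
    (fun g => measurable_of_mem_dictionaryClass hφmeas) isCompact_Icc hmargin
    hΦsmooth.continuous hconc hg'

/-- In binary classification with a smooth convex loss `Φ` such that
`β ≥ β_Φ := sup_{|u| ≤ RL_φ} Φ′(u)²/Φ″(u)` (convention 0/0 = 0; encoded by
`Φ′(u)² ≤ β Φ″(u)` on `|u| ≤ RL_φ`), for every fixed `g̃ ∈ ℱ_Λ` the map
`g ↦ ∫ exp(−β⁻¹{Φ(−y g(x)) − Φ(−y g̃(x))}) P(dx,dy)` is concave on `ℱ_Λ`; in particular
Assumption Q2 holds with `Ψ_β(g,g̃)` equal to this integral. -/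
theorem classification_Q2_concavity
    {X : Type} [MeasurableSpace X]
    (M : ℕ) (R : ℝ) (hRpos : 0 < R)
    (P : Measure (X × ℝ)) [IsProbabilityMeasure P]
    (hlabels : ∀ᵐ z ∂P, z.2 = 1 ∨ z.2 = -1)
    (PX : Measure X) (hPX : PX = P.map Prod.fst)
    (φ : Fin M → X → ℝ) (hφmeas : ∀ j, Measurable (φ j))
    (Lφ : ℝ) (hLφ : 0 < Lφ)
    (hφbound : ∀ j, ∀ᵐ x ∂PX, |φ j x| ≤ Lφ)
    (flam : (Fin M → ℝ) → X → ℝ)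
    (hflam : ∀ (l : Fin M → ℝ) (x : X), flam l x = ∑ j, l j * φ j x)
    -- the convex dictionary class ℱ_Λ
    (FΛ : Set (X → ℝ))
    (hFΛ : FΛ = {g | ∃ l : Fin M → ℝ, (∑ j, |l j|) ≤ R ∧ g = flam l})
    -- the loss Φ
    (Φ : ℝ → ℝ) (hΦnn : ∀ u, 0 ≤ Φ u) (hΦconv : ConvexOn ℝ Set.univ Φ)
    (hΦsmooth : ContDiff ℝ 2 Φ)
    (β : ℝ) (hβpos : 0 < β)
    (hβΦ : ∀ u : ℝ, |u| ≤ R * Lφ → deriv Φ u ^ 2 ≤ β * deriv (deriv Φ) u)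
    (Ψ : (X → ℝ) → (X → ℝ) → ℝ)
    (hΨ : ∀ g g' : X → ℝ, Ψ g g' =
      ∫ z, Real.exp (-(Φ (-z.2 * g z.1) - Φ (-z.2 * g' z.1)) / β) ∂P) :
    (∀ g' ∈ FΛ, ConcaveOn ℝ FΛ fun g => Ψ g g') ∧
    (∀ g ∈ FΛ, Ψ g g = 1) ∧
    (∀ g ∈ FΛ, ∀ g' ∈ FΛ,
      (∫ z, Real.exp (-(Φ (-z.2 * g z.1) - Φ (-z.2 * g' z.1)) / β) ∂P) ≤ Ψ g g') :=
  classification_Q2_concavity_general M R P hlabels PX hPX φ hφmeas Lφ hLφ hφbound flam hflam FΛ hFΛ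
    Φ hΦsmooth β hβpos hβΦ Ψ hΨ
end

section
/- Let M ≥ 2 be an integer, τ > 0 and λ* ∈ ℝ^M, and let p₀ be the probability measure on ℝ^M with Lebesgue density proportional to ∏_{j=1}^M (τ² + (λ_j − λ*_j)²)^{-2} on the set {λ : ‖λ − λ*‖₁ ≤ 2Mτ} and zero elsewhere. Then ∫_{ℝ^M} (λ₁ − λ*₁)² p₀(dλ) ≤ 4τ². -/
/-!
Fix every coordinate except the first. The `ℓ¹` constraint then confines the first coordinate
`u = λ₁ - λ*₁` to an interval `[-B, B]`, and the density is a constant multiple of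
`(τ² + u²)⁻²` there. By Fubini it therefore suffices that
`∫_{-B}^{B} (4τ² - u²) (τ² + u²)⁻² du ≥ 0` for every `B ≥ 0`, which holds because this integrand
has the odd antiderivative `3/(2τ) arctan (u/τ) + 5u / (2(τ² + u²))`, nonnegative for `u ≥ 0`.
-/

open MeasureTheory Set
open scoped ENNReal

noncomputable def priorWeight (τ u : ℝ) : ℝ := ((τ ^ 2 + u ^ 2) ^ 2)⁻¹

lemma priorWeight_nonneg (τ u : ℝ) : 0 ≤ priorWeight τ u := by unfold priorWeight; positivity

section
variable {τ : ℝ}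

lemma continuous_priorWeight (hτ : 0 < τ) : Continuous (priorWeight τ) :=
  Continuous.inv₀ (by fun_prop) fun u => by positivity

lemma hasDerivAt_antideriv_four_sq_sub_sq_mul_priorWeight (hτ : 0 < τ) (u : ℝ) :
    HasDerivAt (fun u => 3 / (2 * τ) * Real.arctan (u / τ) + 5 * u / (2 * (τ ^ 2 + u ^ 2)))
      ((4 * τ ^ 2 - u ^ 2) * priorWeight τ u) u := by
  have hatan : HasDerivAt (fun u => Real.arctan (u / τ)) (1 / (1 + (u / τ) ^ 2) * (1 / τ)) u :=
    ((hasDerivAt_id' u).div_const τ).arctan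
  have hfrac : HasDerivAt (fun u => 5 * u / (2 * (τ ^ 2 + u ^ 2)))
      ((5 * 1 * (2 * (τ ^ 2 + u ^ 2)) - 5 * u * (2 * (2 * u ^ 1))) / (2 * (τ ^ 2 + u ^ 2)) ^ 2) u :=
    ((hasDerivAt_id' u).const_mul 5).div
      (((hasDerivAt_pow 2 u).const_add (τ ^ 2)).const_mul 2) (by positivity)
  refine ((hatan.const_mul (3 / (2 * τ))).add hfrac).congr_deriv ?_
  have : 1 + (u / τ) ^ 2 ≠ 0 := by positivity
  unfold priorWeight
  field_simp
  ring

lemma integral_four_sq_sub_sq_mul_priorWeight_nonneg (hτ : 0 < τ) {B : ℝ} (hB : 0 ≤ B) :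
    0 ≤ ∫ u in -B..B, (4 * τ ^ 2 - u ^ 2) * priorWeight τ u := by
  rw [intervalIntegral.integral_eq_sub_of_hasDerivAt
    (fun u _ => hasDerivAt_antideriv_four_sq_sub_sq_mul_priorWeight hτ u)
    (((continuous_const.sub (continuous_pow 2)).mul
      (continuous_priorWeight hτ)).intervalIntegrable _ _)]
  simp only [neg_div, Real.arctan_neg, neg_sq, mul_neg]
  have hatan : 0 ≤ 3 / (2 * τ) * Real.arctan (B / τ) :=
    mul_nonneg (by positivity) (Real.arctan_nonneg.2 (by positivity))
  have hfrac : 0 ≤ 5 * B / (2 * (τ ^ 2 + B ^ 2)) := by positivity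
  linarith

lemma integral_Icc_priorWeight_mul_sq_le (hτ : 0 < τ) (B : ℝ) :
    ∫ u in Icc (-B) B, priorWeight τ u * u ^ 2 ≤
      4 * τ ^ 2 * ∫ u in Icc (-B) B, priorWeight τ u := by
  rcases lt_or_ge B 0 with hB | hB
  · simp [Icc_eq_empty (by linarith : ¬-B ≤ B)]
  have hw := continuous_priorWeight hτ
  rw [integral_Icc_eq_integral_Ioc, integral_Icc_eq_integral_Ioc,
    ← intervalIntegral.integral_of_le (by linarith),
    ← intervalIntegral.integral_of_le (by linarith),
    ← intervalIntegral.integral_const_mul, ← sub_nonneg,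
    ← intervalIntegral.integral_sub (μ := volume)
      (f := fun u => 4 * τ ^ 2 * priorWeight τ u) (g := fun u => priorWeight τ u * u ^ 2)
      ((continuous_const.mul hw).intervalIntegrable _ _)
      ((hw.mul (continuous_pow 2)).intervalIntegrable _ _)]
  convert integral_four_sq_sub_sq_mul_priorWeight_nonneg hτ hB using 3
  ring

lemma setLIntegral_Icc_priorWeight_mul_sq_le (hτ : 0 < τ) (B : ℝ) :
    ∫⁻ u in Icc (-B) B, ENNReal.ofReal (priorWeight τ u) * ENNReal.ofReal (u ^ 2) ≤
      ENNReal.ofReal (4 * τ ^ 2) * ∫⁻ u in Icc (-B) B, ENNReal.ofReal (priorWeight τ u) := by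
  have hw := continuous_priorWeight hτ
  simp_rw [← ENNReal.ofReal_mul (priorWeight_nonneg τ _)]
  have hw2 : Continuous fun u => priorWeight τ u * u ^ 2 := hw.mul (continuous_pow 2)
  rw [← ofReal_integral_eq_lintegral_ofReal hw2.integrableOn_Icc
      (ae_of_all _ fun u => mul_nonneg (priorWeight_nonneg τ u) (sq_nonneg u)),
    ← ofReal_integral_eq_lintegral_ofReal hw.integrableOn_Icc
      (ae_of_all _ (priorWeight_nonneg τ)),
    ← ENNReal.ofReal_mul (by positivity)]
  exact ENNReal.ofReal_le_ofReal (integral_Icc_priorWeight_mul_sq_le hτ B)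

end

lemma lintegral_eq_lintegral_insertNth {α : Type*} [MeasureSpace α]
    [SigmaFinite (volume : Measure α)] {n : ℕ} (i : Fin (n + 1))
    {F : (Fin (n + 1) → α) → ℝ≥0∞} (hF : Measurable F) :
    ∫⁻ v, F v = ∫⁻ y, ∫⁻ x, F (i.insertNth x y) := by
  have e := (volume_preserving_piFinSuccAbove (fun _ => α) i).symm
  rw [← e.lintegral_comp hF, Measure.volume_eq_prod]
  exact lintegral_prod_symm' _ (hF.comp e.measurable)

noncomputable def truncatedPriorDensity {n : ℕ} (τ T c : ℝ) (v : Fin n → ℝ) : ℝ :=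
  if ∑ j, |v j| ≤ T then c * ∏ j, priorWeight τ (v j) else 0

lemma measurable_truncatedPriorDensity {n : ℕ} (τ T c : ℝ) :
    Measurable (truncatedPriorDensity (n := n) τ T c) := by
  unfold truncatedPriorDensity priorWeight
  refine Measurable.ite ?_ (by fun_prop) measurable_const
  exact measurableSet_le (by fun_prop) measurable_const

lemma ofReal_truncatedPriorDensity_insertNth {n : ℕ} (τ T c : ℝ) (i : Fin (n + 1)) (x : ℝ)
    (y : Fin n → ℝ) :
    ENNReal.ofReal (truncatedPriorDensity τ T c (i.insertNth x y)) =
      (Icc (-(T - ∑ j, |y j|)) (T - ∑ j, |y j|)).indicator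
          (fun u => ENNReal.ofReal (priorWeight τ u)) x *
        ENNReal.ofReal (c * ∏ j, priorWeight τ (y j)) := by
  simp only [indicator, mem_Icc, ← abs_le]
  simp only [truncatedPriorDensity, Fin.sum_univ_succAbove _ i, Fin.prod_univ_succAbove _ i,
    Fin.insertNth_apply_same, Fin.insertNth_apply_succAbove, le_sub_iff_add_le]
  split_ifs
  · rw [← ENNReal.ofReal_mul (priorWeight_nonneg τ x), mul_left_comm]
  · simp

lemma lintegral_truncatedPriorDensity_mul_sq_le {n : ℕ} {τ : ℝ} (hτ : 0 < τ) (T c : ℝ)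
    (i : Fin (n + 1)) :
    ∫⁻ v, ENNReal.ofReal (truncatedPriorDensity τ T c v) * ENNReal.ofReal (v i ^ 2) ≤
      ENNReal.ofReal (4 * τ ^ 2) *
        ∫⁻ v : Fin (n + 1) → ℝ, ENNReal.ofReal (truncatedPriorDensity τ T c v) := by
  have hD := (measurable_truncatedPriorDensity (n := n + 1) τ T c).ennreal_ofReal
  have hDsq : Measurable fun v : Fin (n + 1) → ℝ =>
      ENNReal.ofReal (truncatedPriorDensity τ T c v) * ENNReal.ofReal (v i ^ 2) :=
    hD.mul (by fun_prop)
  rw [lintegral_eq_lintegral_insertNth i hDsq,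
    lintegral_eq_lintegral_insertNth i hD, ← lintegral_const_mul' _ _ ENNReal.ofReal_ne_top]
  refine lintegral_mono fun y => ?_
  simp only [ofReal_truncatedPriorDensity_insertNth, Fin.insertNth_apply_same,
    mul_right_comm _ (ENNReal.ofReal (c * _)), lintegral_mul_const' _ _ ENNReal.ofReal_ne_top,
    ← indicator_mul_left _ (fun x => ENNReal.ofReal (priorWeight τ x))
      (fun x => ENNReal.ofReal (x ^ 2)), lintegral_indicator measurableSet_Icc]
  rw [← mul_assoc]
  exact mul_le_mul_left (setLIntegral_Icc_priorWeight_mul_sq_le hτ _) _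

/-- Lemma 2: Let `M ≥ 2`, `τ > 0`, `λ* ∈ ℝ^M`, and let `p₀` be the probability
measure on `ℝ^M` with Lebesgue density proportional to `∏_j (τ² + (λ_j − λ*_j)²)^{-2}` on
`{λ : ‖λ − λ*‖₁ ≤ 2Mτ}` and zero elsewhere.  Then `∫ (λ₁ − λ*₁)² p₀(dλ) ≤ 4τ²`. -/
theorem translated_prior_second_moment
    (M : ℕ) (hM : 2 ≤ M) (τ : ℝ) (hτ : 0 < τ) (lstar : Fin M → ℝ)
    (c : ℝ)
    (p₀ : Measure (Fin M → ℝ))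
    (hp₀ : p₀ = volume.withDensity fun l => ENNReal.ofReal
      (if (∑ j, |l j - lstar j|) ≤ 2 * M * τ then
        c * ∏ j, ((τ ^ 2 + (l j - lstar j) ^ 2) ^ 2)⁻¹ else 0))
    (hprob : IsProbabilityMeasure p₀) :
    (∫ l, (l ⟨0, by omega⟩ - lstar ⟨0, by omega⟩) ^ 2 ∂p₀) ≤ 4 * τ ^ 2 := by
  obtain ⟨m, rfl⟩ : ∃ m, M = m + 1 := ⟨M - 1, by omega⟩
  set D := truncatedPriorDensity (n := m + 1) τ (2 * (m + 1 : ℕ) * τ) c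
  have hp : p₀ = volume.withDensity fun l => ENNReal.ofReal (D (l - lstar)) := hp₀
  have hD : Measurable fun l => ENNReal.ofReal (D (l - lstar)) :=
    (measurable_truncatedPriorDensity τ _ c).ennreal_ofReal.comp (measurable_id.sub_const _)
  rw [integral_eq_lintegral_of_nonneg_ae (ae_of_all _ fun _ => sq_nonneg _)
    (Continuous.aestronglyMeasurable (by fun_prop))]
  refine ENNReal.toReal_le_of_le_ofReal (by positivity) ?_
  calc _ = ∫⁻ l, ENNReal.ofReal (D (l - lstar)) * ENNReal.ofReal ((l - lstar) 0 ^ 2) := by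
        rw [hp, lintegral_withDensity_eq_lintegral_mul _ hD (by fun_prop)]
        rfl
    _ = ∫⁻ v, ENNReal.ofReal (D v) * ENNReal.ofReal (v 0 ^ 2) :=
        lintegral_sub_right_eq_self
          (fun v => ENNReal.ofReal (D v) * ENNReal.ofReal (v 0 ^ 2)) lstar
    _ ≤ ENNReal.ofReal (4 * τ ^ 2) * ∫⁻ v, ENNReal.ofReal (D v) :=
        lintegral_truncatedPriorDensity_mul_sq_le hτ _ c 0
    _ = ENNReal.ofReal (4 * τ ^ 2) * p₀ univ := by
        rw [hp, withDensity_apply _ MeasurableSet.univ, setLIntegral_univ,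
          lintegral_sub_right_eq_self (fun v => ENNReal.ofReal (D v)) lstar]
    _ = ENNReal.ofReal (4 * τ ^ 2) := by rw [measure_univ, mul_one]
end

section
/- Let M ≥ 2 be an integer, τ > 0, R > 2Mτ, and λ* ∈ ℝ^M with ‖λ*‖₁ ≤ R − 2Mτ. Let π be the sparsity prior on ℝ^M and let p₀ be the probability measure on ℝ^M with Lebesgue density proportional to ∏_{j=1}^M (τ² + (λ_j − λ*_j)²)^{-2} on {λ : ‖λ − λ*‖₁ ≤ 2Mτ} and zero elsewhere. Then p₀ ≪ π and KL(p₀, π) ≤ 4 ∑_{j=1}^M log(1 + |λ*_j|/τ) + 1. -/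
/-!
The likelihood ratio `dp₀/dπ` vanishes off the ball `‖λ - λ*‖₁ ≤ 2Mτ`, which lies inside the
support of `π`, and on it equals `(c₀/cπ) ∏ⱼ ((τ² + λⱼ²) / (τ² + (λⱼ - λ*ⱼ)²))²`. Each factor is at
most `(1 + |λ*ⱼ|/τ)⁴`, since `√(τ² + x²) ≤ √(τ² + (x - a)²) + |a|` and `√(τ² + (x - a)²) ≥ τ`.
The ratio `c₀/cπ` is the ratio of the prior masses of the `ℓ¹`-balls of radii `R` and `2Mτ`. With
`A = ∫ (τ² + u²)⁻² du = π/(2τ³)` and `∫ |u| (τ² + u²)⁻² du = τ⁻²`, Markov's inequality for `‖λ‖₁`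
bounds the mass outside the small ball by `A^M/π`, so `c₀/cπ ≤ π/(π - 1) < e`.
-/

open MeasureTheory Set Filter Topology

section OneDim

variable {τ : ℝ}

lemma integrable_inv_sq_add_sq (hτ : 0 < τ) : Integrable fun u : ℝ => (τ ^ 2 + u ^ 2)⁻¹ := by
  refine ((integrable_inv_one_add_sq.comp_div hτ.ne').const_mul (τ ^ 2)⁻¹).congr
    (ae_of_all _ fun u => ?_)
  field_simp

lemma integrable_inv_sq_add_sq_sq (hτ : 0 < τ) :
    Integrable fun u : ℝ => ((τ ^ 2 + u ^ 2) ^ 2)⁻¹ := by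
  refine ((integrable_inv_sq_add_sq hτ).const_mul (τ ^ 2)⁻¹).mono' (by fun_prop)
    (ae_of_all _ fun u => ?_)
  rw [Real.norm_of_nonneg (by positivity), sq, mul_inv]
  gcongr
  exact le_add_of_nonneg_right (sq_nonneg u)

lemma integrable_abs_mul_inv_sq_add_sq_sq (hτ : 0 < τ) :
    Integrable fun u : ℝ => |u| * ((τ ^ 2 + u ^ 2) ^ 2)⁻¹ := by
  refine ((integrable_inv_sq_add_sq hτ).const_mul (2 * τ)⁻¹).mono' (by fun_prop)
    (ae_of_all _ fun u => ?_)
  have hamgm : 2 * τ * |u| ≤ τ ^ 2 + u ^ 2 := by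
    nlinarith [sq_abs u, sq_nonneg (τ - |u|)]
  rw [Real.norm_of_nonneg (by positivity), ← div_eq_mul_inv, div_le_iff₀ (by positivity)]
  calc |u| = (2 * τ)⁻¹ * (2 * τ * |u|) := by field_simp
    _ ≤ (2 * τ)⁻¹ * (τ ^ 2 + u ^ 2) := by gcongr
    _ = (2 * τ)⁻¹ * (τ ^ 2 + u ^ 2)⁻¹ * (τ ^ 2 + u ^ 2) ^ 2 := by field_simp

lemma tendsto_div_sq_add_sq_cocompact (τ : ℝ) :
    Tendsto (fun v : ℝ => v / (τ ^ 2 + v ^ 2)) (cocompact ℝ) (𝓝 0) := by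
  refine squeeze_zero_norm (a := fun v => ‖v‖⁻¹) (fun v => ?_)
    tendsto_norm_cocompact_atTop.inv_tendsto_atTop
  rcases eq_or_ne v 0 with rfl | hv
  · simp
  have hv' : 0 < ‖v‖ := norm_pos_iff.mpr hv
  rw [norm_div, Real.norm_of_nonneg (by positivity : (0 : ℝ) ≤ τ ^ 2 + v ^ 2),
    div_le_iff₀ (by positivity), le_inv_mul_iff₀ hv', ← sq, Real.norm_eq_abs, sq_abs]
  exact le_add_of_nonneg_left (sq_nonneg τ)

open Real in
lemma integral_inv_sq_add_sq_sq (hτ : 0 < τ) :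
    ∫ u : ℝ, ((τ ^ 2 + u ^ 2) ^ 2)⁻¹ = π / (2 * τ ^ 3) := by
  set F : ℝ → ℝ := fun v => (v / (τ ^ 2 + v ^ 2) + arctan (v / τ) / τ) / (2 * τ ^ 2)
  have hF : ∀ u, HasDerivAt F ((τ ^ 2 + u ^ 2) ^ 2)⁻¹ u := by
    intro u
    have hpos : 0 < τ ^ 2 + u ^ 2 := by positivity
    refine (((hasDerivAt_id u).div ((hasDerivAt_pow 2 u).const_add (τ ^ 2)) hpos.ne').add
      (((hasDerivAt_id u).div_const τ).arctan.div_const τ)).div_const (2 * τ ^ 2)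
      |>.congr_deriv ?_
    simp only [id]
    field_simp
    ring
  have hlim : ∀ {l : Filter ℝ}, l ≤ cocompact ℝ → ∀ {c : ℝ},
      Tendsto (fun v => arctan (v / τ)) l (𝓝 c) → Tendsto F l (𝓝 (c / τ / (2 * τ ^ 2))) := by
    intro l hl c hc
    simpa using (((tendsto_div_sq_add_sq_cocompact τ).mono_left hl).add
      (hc.div_const τ)).div_const (2 * τ ^ 2)
  rw [integral_of_hasDerivAt_of_tendsto hF (integrable_inv_sq_add_sq_sq hτ)
    (hlim atBot_le_cocompact ((tendsto_arctan_atBot.mono_right nhdsWithin_le_nhds).comp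
      (tendsto_id.atBot_div_const hτ)))
    (hlim atTop_le_cocompact ((tendsto_arctan_atTop.mono_right nhdsWithin_le_nhds).comp
      (tendsto_id.atTop_div_const hτ)))]
  field_simp
  ring

lemma integral_abs_mul_inv_sq_add_sq_sq (hτ : 0 < τ) :
    ∫ u : ℝ, |u| * ((τ ^ 2 + u ^ 2) ^ 2)⁻¹ = (τ ^ 2)⁻¹ := by
  have hderiv : ∀ u ∈ Ici (0 : ℝ),
      HasDerivAt (fun v => -(2 * (τ ^ 2 + v ^ 2))⁻¹) (u * ((τ ^ 2 + u ^ 2) ^ 2)⁻¹) u := by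
    intro u _
    refine (((hasDerivAt_pow 2 u).const_add (τ ^ 2)).const_mul 2).inv (by positivity)
      |>.neg |>.congr_deriv ?_
    field_simp
    ring
  have hint : IntegrableOn (fun u : ℝ => u * ((τ ^ 2 + u ^ 2) ^ 2)⁻¹) (Ioi 0) :=
    (integrable_abs_mul_inv_sq_add_sq_sq hτ).integrableOn.congr_fun
      (fun u hu => by simp only [abs_of_pos (mem_Ioi.mp hu)]) measurableSet_Ioi
  have hlim : Tendsto (fun v : ℝ => -(2 * (τ ^ 2 + v ^ 2))⁻¹) atTop (𝓝 0) := by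
    have h2 := (tendsto_atTop_add_const_left _ (τ ^ 2)
      (tendsto_pow_atTop (α := ℝ) two_ne_zero)).const_mul_atTop two_pos
    simpa using h2.inv_tendsto_atTop.neg
  have h := integral_comp_abs (f := fun u => u * ((τ ^ 2 + u ^ 2) ^ 2)⁻¹)
  simp only [sq_abs] at h
  rw [h, integral_Ioi_of_hasDerivAt_of_tendsto' hderiv hint hlim]
  field_simp
  ring

end OneDim

section Product

variable {ι : Type*} [Fintype ι] {f : ℝ → ℝ}

lemma measurableSet_sum_abs_le (s : ℝ) : MeasurableSet {l : ι → ℝ | ∑ j, |l j| ≤ s} :=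
  measurableSet_le (by fun_prop) measurable_const

lemma abs_mul_prod_eq_prod_update [DecidableEq ι] (k : ι) (l : ι → ℝ) :
    |l k| * ∏ j, f (l j) = ∏ j, Function.update (fun _ => f) k (fun u => |u| * f u) j (l j) := by
  have hrest : ∏ j ∈ Finset.univ.erase k,
      Function.update (fun _ => f) k (fun u => |u| * f u) j (l j) =
        ∏ j ∈ Finset.univ.erase k, f (l j) :=
    Finset.prod_congr rfl fun j hj => by rw [Function.update_of_ne (Finset.ne_of_mem_erase hj)]
  symm
  rw [← Finset.mul_prod_erase _ _ (Finset.mem_univ k), hrest, Function.update_self,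
    ← Finset.mul_prod_erase _ (fun j => f (l j)) (Finset.mem_univ k), mul_assoc]

lemma integrable_abs_mul_prod (hf : Integrable f) (hg : Integrable fun u => |u| * f u) (k : ι) :
    Integrable fun l : ι → ℝ => |l k| * ∏ j, f (l j) := by
  classical
  simp_rw [abs_mul_prod_eq_prod_update k]
  refine Integrable.fintype_prod fun j => ?_
  rcases eq_or_ne j k with rfl | hj
  · simpa using hg
  · simpa [Function.update_of_ne hj] using hf

lemma integral_abs_mul_prod (k : ι) :
    ∫ l : ι → ℝ, |l k| * ∏ j, f (l j) =
      (∫ u, |u| * f u) * (∫ u, f u) ^ (Fintype.card ι - 1) := by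
  classical
  simp_rw [abs_mul_prod_eq_prod_update k]
  rw [integral_fintype_prod_volume_eq_prod, ← Finset.mul_prod_erase _ _ (Finset.mem_univ k),
    Finset.prod_congr rfl fun j hj => by rw [Function.update_of_ne (Finset.ne_of_mem_erase hj)]]
  simp [Finset.card_erase_of_mem]

lemma setIntegral_prod_lt_sum_abs_le (hf0 : 0 ≤ f) (hf : Integrable f)
    (hg : Integrable fun u => |u| * f u) {s : ℝ} (hs : 0 < s) :
    ∫ l in {l : ι → ℝ | s < ∑ j, |l j|}, ∏ j, f (l j) ≤
      s⁻¹ * (Fintype.card ι * ((∫ u, |u| * f u) * (∫ u, f u) ^ (Fintype.card ι - 1))) := by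
  have hprod : Integrable fun l : ι → ℝ => ∏ j, f (l j) := Integrable.fintype_prod fun _ => hf
  have hmarkov : Integrable fun l : ι → ℝ => s⁻¹ * ∑ k, |l k| * ∏ j, f (l j) :=
    (integrable_finsetSum _ fun k _ => integrable_abs_mul_prod hf hg k).const_mul _
  have hprod_nonneg : ∀ l : ι → ℝ, 0 ≤ ∏ j, f (l j) := fun l =>
    Finset.prod_nonneg fun j _ => hf0 (l j)
  calc ∫ l in {l : ι → ℝ | s < ∑ j, |l j|}, ∏ j, f (l j)
      ≤ ∫ l in {l : ι → ℝ | s < ∑ j, |l j|}, s⁻¹ * ∑ k, |l k| * ∏ j, f (l j) := by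
        refine setIntegral_mono_on hprod.integrableOn hmarkov.integrableOn
          (measurableSet_lt measurable_const (by fun_prop)) fun l hl => ?_
        rw [← Finset.sum_mul, ← mul_assoc]
        exact le_mul_of_one_le_left (hprod_nonneg l) ((one_le_inv_mul₀ hs).mpr (le_of_lt hl))
    _ ≤ ∫ l : ι → ℝ, s⁻¹ * ∑ k, |l k| * ∏ j, f (l j) :=
        setIntegral_le_integral hmarkov (ae_of_all _ fun l => mul_nonneg (by positivity)
          (Finset.sum_nonneg fun k _ => mul_nonneg (abs_nonneg _) (hprod_nonneg l)))
    _ = _ := by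
        rw [integral_const_mul, integral_finsetSum _ fun k _ => integrable_abs_mul_prod hf hg k]
        simp [integral_abs_mul_prod]

lemma sub_le_setIntegral_prod_sum_abs_le (hf0 : 0 ≤ f) (hf : Integrable f)
    (hg : Integrable fun u => |u| * f u) {s : ℝ} (hs : 0 < s) :
    (∫ u, f u) ^ Fintype.card ι -
        s⁻¹ * (Fintype.card ι * ((∫ u, |u| * f u) * (∫ u, f u) ^ (Fintype.card ι - 1))) ≤
      ∫ l in {l : ι → ℝ | ∑ j, |l j| ≤ s}, ∏ j, f (l j) := by
  have hsplit := integral_add_compl (μ := volume) (f := fun l : ι → ℝ => ∏ j, f (l j))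
    (measurableSet_sum_abs_le s) (Integrable.fintype_prod fun _ => hf)
  rw [integral_fintype_prod_volume_eq_pow, compl_ofPred] at hsplit
  simp only [not_le] at hsplit
  linarith [setIntegral_prod_lt_sum_abs_le (ι := ι) hf0 hf hg hs]

end Product

open Real in
lemma integral_prod_le_exp_one_mul_setIntegral {ι : Type*} [Fintype ι] [Nonempty ι] {τ : ℝ}
    (hτ : 0 < τ) :
    ∫ l : ι → ℝ, ∏ j, ((τ ^ 2 + l j ^ 2) ^ 2)⁻¹ ≤
      exp 1 * ∫ l in {l : ι → ℝ | ∑ j, |l j| ≤ 2 * Fintype.card ι * τ},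
        ∏ j, ((τ ^ 2 + l j ^ 2) ^ 2)⁻¹ := by
  have hn : 0 < Fintype.card ι := Fintype.card_pos
  have hball := sub_le_setIntegral_prod_sum_abs_le (ι := ι) (fun u => by positivity)
    (integrable_inv_sq_add_sq_sq hτ) (integrable_abs_mul_inv_sq_add_sq_sq hτ)
    (s := 2 * Fintype.card ι * τ) (by positivity)
  rw [integral_fintype_prod_volume_eq_pow (fun u : ℝ => ((τ ^ 2 + u ^ 2) ^ 2)⁻¹)]
  rw [integral_abs_mul_inv_sq_add_sq_sq hτ] at hball
  rw [integral_inv_sq_add_sq_sq hτ] at hball ⊢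
  set A := π / (2 * τ ^ 3) with hA
  have htail : (2 * Fintype.card ι * τ)⁻¹ * (Fintype.card ι * ((τ ^ 2)⁻¹ *
      A ^ (Fintype.card ι - 1))) = A ^ Fintype.card ι / π := by
    obtain ⟨m, hm⟩ := Nat.exists_eq_add_one_of_ne_zero hn.ne'
    rw [hm, Nat.add_sub_cancel, pow_succ A m, mul_div_assoc,
      show A / π = (2 * τ ^ 3)⁻¹ by rw [hA]; field_simp]
    push_cast
    field_simp
  rw [htail] at hball
  have hpi : π⁻¹ < 3⁻¹ := inv_strictAnti₀ (by norm_num) pi_gt_three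
  have hconst : 1 ≤ exp 1 * (1 - π⁻¹) := by nlinarith [exp_one_gt_d9]
  calc A ^ Fintype.card ι ≤ exp 1 * (1 - π⁻¹) * A ^ Fintype.card ι :=
        le_mul_of_one_le_left (by positivity) hconst
    _ = exp 1 * (A ^ Fintype.card ι - A ^ Fintype.card ι / π) := by ring
    _ ≤ _ := by gcongr

section Measure

variable {α : Type*} [MeasurableSpace α] {μ : Measure α}

lemma mul_setIntegral_eq_one_of_isProbabilityMeasure_withDensity {S : Set α}
    [DecidablePred (· ∈ S)] (hS : MeasurableSet S) {c : ℝ} {F : α → ℝ} (hc : 0 ≤ c) (hF : 0 ≤ F)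
    (hFm : Measurable F)
    (hprob : IsProbabilityMeasure
      (μ.withDensity fun x => ENNReal.ofReal (if x ∈ S then c * F x else 0))) :
    c * ∫ x in S, F x ∂μ = 1 := by
  have hd : Measurable fun x => if x ∈ S then c * F x else 0 :=
    Measurable.ite hS (hFm.const_mul c) measurable_const
  calc c * ∫ x in S, F x ∂μ = ∫ x, (if x ∈ S then c * F x else 0) ∂μ := by
        rw [← integral_const_mul, ← integral_indicator hS]
        simp only [Set.indicator_apply]
    _ = (∫⁻ x, ENNReal.ofReal (if x ∈ S then c * F x else 0) ∂μ).toReal :=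
        integral_eq_lintegral_of_nonneg_ae
          (ae_of_all _ fun x => show (0 : ℝ) ≤ if x ∈ S then c * F x else 0 by
            split_ifs
            exacts [mul_nonneg hc (hF x), le_rfl]) hd.aestronglyMeasurable
    _ = 1 := by
        rw [← setLIntegral_univ, ← withDensity_apply _ MeasurableSet.univ, hprob.measure_univ,
          ENNReal.toReal_one]

lemma withDensity_ofReal_mul {d r : α → ℝ} (hd : Measurable d) (hr : Measurable r) (hd0 : 0 ≤ d) :
    μ.withDensity (fun x => ENNReal.ofReal (d x * r x)) =
      (μ.withDensity fun x => ENNReal.ofReal (d x)).withDensity fun x => ENNReal.ofReal (r x) := by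
  rw [← withDensity_mul _ hd.ennreal_ofReal hr.ennreal_ofReal]
  congr 1
  funext x
  exact ENNReal.ofReal_mul (hd0 x)

lemma integral_le_of_ae_le_of_nonneg [IsProbabilityMeasure μ] {g : α → ℝ} {C : ℝ} (hC : 0 ≤ C)
    (hg : ∀ᵐ x ∂μ, g x ≤ C) : ∫ x, g x ∂μ ≤ C := by
  by_cases hint : Integrable g μ
  · simpa using integral_mono_ae hint (integrable_const C) hg
  · rw [integral_undef hint]
    exact hC

end Measure

lemma sq_add_sq_le_one_add_abs_div_sq_mul {τ : ℝ} (hτ : 0 < τ) (a x : ℝ) :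
    τ ^ 2 + x ^ 2 ≤ (1 + |a| / τ) ^ 2 * (τ ^ 2 + (x - a) ^ 2) := by
  have htri : |x| ≤ |x - a| + |a| := by linarith [abs_sub_abs_le_abs_sub x a]
  have hsq : x ^ 2 ≤ (|x - a| + |a|) ^ 2 := by
    rw [← sq_abs x]; exact pow_le_pow_left₀ (abs_nonneg x) htri 2
  have hquad : 0 ≤ τ ^ 2 - τ * |x - a| + |x - a| ^ 2 := by nlinarith [sq_nonneg (τ - |x - a|)]
  rw [one_add_div hτ.ne', div_pow, div_mul_eq_mul_div, le_div_iff₀ (by positivity)]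
  nlinarith [mul_nonneg (mul_nonneg hτ.le (abs_nonneg a)) hquad, sq_nonneg (|a| * |x - a|),
    sq_abs (x - a)]

lemma prod_sq_add_sq_div_le {ι : Type*} [Fintype ι] {τ : ℝ} (hτ : 0 < τ) (a x : ι → ℝ) :
    ∏ j, (τ ^ 2 + x j ^ 2) ^ 2 * ((τ ^ 2 + (x j - a j) ^ 2) ^ 2)⁻¹ ≤ ∏ j, (1 + |a j| / τ) ^ 4 := by
  refine Finset.prod_le_prod (fun j _ => by positivity) fun j _ => ?_
  rw [← div_eq_mul_inv, div_le_iff₀ (by positivity), show 4 = 2 * 2 by rfl, pow_mul, ← mul_pow]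
  exact pow_le_pow_left₀ (by positivity) (sq_add_sq_le_one_add_abs_div_sq_mul hτ (a j) (x j)) 2

lemma log_prod_sq_add_sq_div_le {ι : Type*} [Fintype ι] {τ : ℝ} (hτ : 0 < τ) (a x : ι → ℝ) :
    Real.log (∏ j, (τ ^ 2 + x j ^ 2) ^ 2 * ((τ ^ 2 + (x j - a j) ^ 2) ^ 2)⁻¹) ≤
      4 * ∑ j, Real.log (1 + |a j| / τ) := by
  calc Real.log (∏ j, (τ ^ 2 + x j ^ 2) ^ 2 * ((τ ^ 2 + (x j - a j) ^ 2) ^ 2)⁻¹)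
      ≤ Real.log (∏ j, (1 + |a j| / τ) ^ 4) :=
        Real.log_le_log (Finset.prod_pos fun j _ => by positivity) (prod_sq_add_sq_div_le hτ a x)
    _ = 4 * ∑ j, Real.log (1 + |a j| / τ) := by
        rw [Real.log_prod fun j _ => by positivity, Finset.mul_sum]
        simp [Real.log_pow]

section SparsityPrior

variable {ι : Type*} [Fintype ι]

noncomputable def sparsityDensity (τ R c : ℝ) (l : ι → ℝ) : ℝ :=
  if ∑ j, |l j| ≤ R then c * ∏ j, ((τ ^ 2 + l j ^ 2) ^ 2)⁻¹ else 0

noncomputable def translatedDensityRatio (τ s c : ℝ) (a l : ι → ℝ) : ℝ :=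
  if ∑ j, |l j - a j| ≤ s then
    c * ∏ j, (τ ^ 2 + l j ^ 2) ^ 2 * ((τ ^ 2 + (l j - a j) ^ 2) ^ 2)⁻¹
  else 0

lemma measurable_sparsityDensity (τ R c : ℝ) : Measurable (sparsityDensity (ι := ι) τ R c) :=
  Measurable.ite (measurableSet_le (by fun_prop) measurable_const) (by fun_prop) measurable_const

lemma sparsityDensity_nonneg (τ R : ℝ) {c : ℝ} (hc : 0 ≤ c) :
    0 ≤ sparsityDensity (ι := ι) τ R c := fun l => by
  unfold sparsityDensity
  split_ifs <;> positivity

lemma measurable_translatedDensityRatio (τ s c : ℝ) (a : ι → ℝ) :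
    Measurable (translatedDensityRatio τ s c a) :=
  Measurable.ite (measurableSet_le (by fun_prop) measurable_const) (by fun_prop) measurable_const

lemma translatedDensityRatio_nonneg (τ s : ℝ) {c : ℝ} (hc : 0 ≤ c) (a : ι → ℝ) :
    0 ≤ translatedDensityRatio τ s c a := fun l => by
  unfold translatedDensityRatio
  split_ifs <;> positivity

lemma mul_setIntegral_eq_one_of_isProbabilityMeasure_sparsityDensity {τ R c : ℝ} (hc : 0 ≤ c)
    (a : ι → ℝ) (hprob : IsProbabilityMeasure
      (volume.withDensity fun l => ENNReal.ofReal (sparsityDensity τ R c (l - a)))) :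
    c * ∫ l in {l : ι → ℝ | ∑ j, |l j| ≤ R}, ∏ j, ((τ ^ 2 + l j ^ 2) ^ 2)⁻¹ = 1 := by
  have hF : Measurable fun l : ι → ℝ => ∏ j, ((τ ^ 2 + l j ^ 2) ^ 2)⁻¹ := by fun_prop
  rw [← (measurePreserving_sub_right volume a).setIntegral_preimage_emb
    (measurableEmbedding_subRight a)]
  exact mul_setIntegral_eq_one_of_isProbabilityMeasure_withDensity
    (S := {l : ι → ℝ | ∑ j, |(l - a) j| ≤ R})
    (measurable_sub_const a (measurableSet_sum_abs_le R)) hc (fun l => by positivity)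
    (hF.comp (measurable_sub_const a)) hprob

lemma div_le_exp_one_of_mul_setIntegral_eq_one [Nonempty ι] {τ R c₀ cπ : ℝ} (hτ : 0 < τ)
    (hc₀ : 0 < c₀) (hcπ : 0 < cπ)
    (hπ : cπ * ∫ l in {l : ι → ℝ | ∑ j, |l j| ≤ R}, ∏ j, ((τ ^ 2 + l j ^ 2) ^ 2)⁻¹ = 1)
    (h₀ : c₀ * ∫ l in {l : ι → ℝ | ∑ j, |l j| ≤ 2 * Fintype.card ι * τ},
      ∏ j, ((τ ^ 2 + l j ^ 2) ^ 2)⁻¹ = 1) :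
    c₀ / cπ ≤ Real.exp 1 := by
  have hle : ∫ l in {l : ι → ℝ | ∑ j, |l j| ≤ R}, ∏ j, ((τ ^ 2 + l j ^ 2) ^ 2)⁻¹ ≤
      ∫ l : ι → ℝ, ∏ j, ((τ ^ 2 + l j ^ 2) ^ 2)⁻¹ :=
    setIntegral_le_integral (Integrable.fintype_prod fun _ => integrable_inv_sq_add_sq_sq hτ)
      (ae_of_all _ fun l => by positivity)
  rw [div_le_iff₀ hcπ]
  nlinarith [mul_le_mul_of_nonneg_left (hle.trans (integral_prod_le_exp_one_mul_setIntegral hτ))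
    (mul_pos hc₀ hcπ).le]

lemma sparsityDensity_sub_eq_mul_translatedDensityRatio {τ R s cπ c₀ : ℝ} (hτ : τ ≠ 0)
    (hcπ : cπ ≠ 0) {a : ι → ℝ} (ha : ∑ j, |a j| ≤ R - s) (l : ι → ℝ) :
    sparsityDensity τ s c₀ (l - a) =
      sparsityDensity τ R cπ l * translatedDensityRatio τ s (c₀ / cπ) a l := by
  unfold sparsityDensity translatedDensityRatio
  simp only [Pi.sub_apply]
  split_ifs with h₀ hR
  · rw [mul_mul_mul_comm, show cπ * (c₀ / cπ) = c₀ by field_simp, ← Finset.prod_mul_distrib]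
    congr 1
    refine Finset.prod_congr rfl fun j _ => ?_
    field_simp
  · have htri := Finset.sum_le_sum fun j (_ : j ∈ Finset.univ) =>
      abs_sub_abs_le_abs_sub (l j) (a j)
    rw [Finset.sum_sub_distrib] at htri
    exact absurd (by linarith) hR
  · simp
  · simp

lemma sum_log_one_add_abs_div_nonneg {τ : ℝ} (hτ : 0 ≤ τ) (a : ι → ℝ) :
    0 ≤ ∑ j, Real.log (1 + |a j| / τ) :=
  Finset.sum_nonneg fun j _ => Real.log_nonneg (le_add_of_nonneg_right (by positivity))

lemma log_translatedDensityRatio_le {τ s c : ℝ} (hτ : 0 < τ) (hc : 0 < c) (hce : c ≤ Real.exp 1)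
    (a l : ι → ℝ) :
    Real.log (translatedDensityRatio τ s c a l) ≤ 4 * ∑ j, Real.log (1 + |a j| / τ) + 1 := by
  have hsum := sum_log_one_add_abs_div_nonneg hτ.le a
  unfold translatedDensityRatio
  split_ifs
  · rw [Real.log_mul hc.ne' (Finset.prod_pos fun j _ => by positivity).ne']
    linarith [log_prod_sq_add_sq_div_le hτ a l, (Real.log_le_iff_le_exp hc).mpr hce]
  · rw [Real.log_zero]
    linarith

end SparsityPrior

theorem translated_prior_KL_general
    (M : ℕ) (hM : 2 ≤ M) (τ R : ℝ) (hτ : 0 < τ)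
    (lstar : Fin M → ℝ) (hlstar : (∑ j, |lstar j|) ≤ R - 2 * M * τ)
    -- the sparsity prior π (with normalizing constant cπ)
    (cπ : ℝ) (hcπ : 0 < cπ)
    (π : Measure (Fin M → ℝ))
    (hπ : π = volume.withDensity fun l => ENNReal.ofReal
      (if (∑ j, |l j|) ≤ R then cπ * ∏ j, ((τ ^ 2 + l j ^ 2) ^ 2)⁻¹ else 0))
    (hπprob : IsProbabilityMeasure π)
    -- the translated and truncated prior p₀ (with normalizing constant c₀)
    (c₀ : ℝ) (hc₀ : 0 < c₀)
    (p₀ : Measure (Fin M → ℝ))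
    (hp₀ : p₀ = volume.withDensity fun l => ENNReal.ofReal
      (if (∑ j, |l j - lstar j|) ≤ 2 * M * τ then
        c₀ * ∏ j, ((τ ^ 2 + (l j - lstar j) ^ 2) ^ 2)⁻¹ else 0))
    (hp₀prob : IsProbabilityMeasure p₀) :
    p₀ ≪ π ∧
      (∫ l, Real.log ((p₀.rnDeriv π l).toReal) ∂p₀) ≤
        4 * ∑ j, Real.log (1 + |lstar j| / τ) + 1 := by
  have : Nonempty (Fin M) := ⟨⟨0, by omega⟩⟩
  have hZπ := mul_setIntegral_eq_one_of_isProbabilityMeasure_sparsityDensity (τ := τ) (R := R)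
    hcπ.le 0 (by subst hπ; simpa [sparsityDensity] using hπprob)
  have hZ₀ := mul_setIntegral_eq_one_of_isProbabilityMeasure_sparsityDensity hc₀.le lstar
    (hp₀ ▸ hp₀prob)
  have hratio : c₀ / cπ ≤ Real.exp 1 :=
    div_le_exp_one_of_mul_setIntegral_eq_one (ι := Fin M) hτ hc₀ hcπ hZπ (by rwa [Fintype.card_fin])
  set r := translatedDensityRatio τ (2 * M * τ) (c₀ / cπ) lstar
  have hrm : Measurable r := measurable_translatedDensityRatio _ _ _ lstar
  have hdensity : p₀ = π.withDensity fun l => ENNReal.ofReal (r l) := by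
    have hπ' : π = volume.withDensity fun l => ENNReal.ofReal (sparsityDensity τ R cπ l) := hπ
    have hp₀' : p₀ = volume.withDensity fun l =>
        ENNReal.ofReal (sparsityDensity τ (2 * M * τ) c₀ (l - lstar)) := hp₀
    rw [hp₀', hπ', ← withDensity_ofReal_mul (measurable_sparsityDensity τ R cπ)
      hrm (sparsityDensity_nonneg τ R hcπ.le)]
    simp_rw [sparsityDensity_sub_eq_mul_translatedDensityRatio hτ.ne' hcπ.ne' hlstar]
    rfl
  have hac : p₀ ≪ π := hdensity ▸ withDensity_absolutelyContinuous _ _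
  have hrn : p₀.rnDeriv π =ᵐ[p₀] fun l => ENNReal.ofReal (r l) := hac.ae_eq <| by
    rw [hdensity]
    exact Measure.rnDeriv_withDensity π hrm.ennreal_ofReal
  have hC := sum_log_one_add_abs_div_nonneg hτ.le lstar
  refine ⟨hac, integral_le_of_ae_le_of_nonneg (by positivity) ?_⟩
  filter_upwards [hrn] with l hl
  rw [hl, ENNReal.toReal_ofReal (translatedDensityRatio_nonneg _ _ (by positivity) lstar l)]
  exact log_translatedDensityRatio_le hτ (by positivity) hratio lstar l

/-- Lemma 3: Let `M ≥ 2`, `τ > 0`, `R > 2Mτ`, and `λ* ∈ ℝ^M` with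
`‖λ*‖₁ ≤ R − 2Mτ`.  Let `π` be the sparsity prior and `p₀` the translated-and-truncated
prior centered at `λ*`.  Then `p₀ ≪ π` and `KL(p₀, π) ≤ 4 ∑_j log(1 + |λ*_j|/τ) + 1`. -/
theorem translated_prior_KL
    (M : ℕ) (hM : 2 ≤ M) (τ R : ℝ) (hτ : 0 < τ) (hR : 2 * M * τ < R)
    (lstar : Fin M → ℝ) (hlstar : (∑ j, |lstar j|) ≤ R - 2 * M * τ)
    -- the sparsity prior π (with normalizing constant cπ)
    (cπ : ℝ) (hcπ : 0 < cπ)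
    (π : Measure (Fin M → ℝ))
    (hπ : π = volume.withDensity fun l => ENNReal.ofReal
      (if (∑ j, |l j|) ≤ R then cπ * ∏ j, ((τ ^ 2 + l j ^ 2) ^ 2)⁻¹ else 0))
    (hπprob : IsProbabilityMeasure π)
    -- the translated and truncated prior p₀ (with normalizing constant c₀)
    (c₀ : ℝ) (hc₀ : 0 < c₀)
    (p₀ : Measure (Fin M → ℝ))
    (hp₀ : p₀ = volume.withDensity fun l => ENNReal.ofReal
      (if (∑ j, |l j - lstar j|) ≤ 2 * M * τ then
        c₀ * ∏ j, ((τ ^ 2 + (l j - lstar j) ^ 2) ^ 2)⁻¹ else 0))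
    (hp₀prob : IsProbabilityMeasure p₀) :
    p₀ ≪ π ∧
      (∫ l, Real.log ((p₀.rnDeriv π l).toReal) ∂p₀) ≤
        4 * ∑ j, Real.log (1 + |lstar j| / τ) + 1 :=
  translated_prior_KL_general M hM τ R hτ lstar hlstar cπ hcπ π hπ hπprob c₀ hc₀ p₀ hp₀ hp₀prob
end

section
/- For every integer M ≥ 2: ∫_{{u ∈ ℝ^M : ‖u‖₁ ≤ 2M}} ∏_{j=1}^M (1 + u_j²)^{-2} du ≥ (1 − 1/M) · (π/2)^M. -/
/-!
With the weight `w(t) = (1 + t²)⁻²` one has `∫ w = ∫ t² w = π/2` and `∫ |t| w = 1`, so under the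
probability density `(2/π) w` the variable `|t|` has mean `2/π` and second moment `1`. Outside the
ball `‖u‖₁ ≤ 2M` the centered sum `∑ⱼ (|uⱼ| - 2/π)` is at least `M (2 - 2/π)`, while its second
moment against `∏ⱼ w(uⱼ)` is `M (π/2 - 2/π) (π/2)^(M-1)` because the cross terms vanish.
Chebyshev's inequality bounds the mass outside the ball by `(π/2)^M / M`, and the total mass is
`(π/2)^M`.
-/

open MeasureTheory Real Filter Set Topology

noncomputable def invOneAddSqSq (t : ℝ) : ℝ := ((1 + t ^ 2) ^ 2)⁻¹

lemma invOneAddSqSq_nonneg (t : ℝ) : 0 ≤ invOneAddSqSq t := by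
  unfold invOneAddSqSq; positivity

lemma invOneAddSqSq_abs (t : ℝ) : invOneAddSqSq |t| = invOneAddSqSq t := by
  simp only [invOneAddSqSq, sq_abs]

lemma one_add_sq_mul_invOneAddSqSq (t : ℝ) : (1 + t ^ 2) * invOneAddSqSq t = (1 + t ^ 2)⁻¹ := by
  unfold invOneAddSqSq; field_simp

lemma continuous_invOneAddSqSq : Continuous invOneAddSqSq :=
  Continuous.inv₀ (by fun_prop) fun t => by positivity

lemma integrable_mul_invOneAddSqSq {a : ℝ → ℝ} (ha : Continuous a)
    (h : ∀ t, |a t| ≤ 1 + t ^ 2) : Integrable fun t => a t * invOneAddSqSq t := by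
  refine integrable_inv_one_add_sq.mono' (ha.mul continuous_invOneAddSqSq).aestronglyMeasurable
    (ae_of_all _ fun t => ?_)
  rw [norm_mul, Real.norm_eq_abs, Real.norm_of_nonneg (invOneAddSqSq_nonneg t),
    ← one_add_sq_mul_invOneAddSqSq]
  exact mul_le_mul_of_nonneg_right (h t) (invOneAddSqSq_nonneg t)

lemma integrable_invOneAddSqSq : Integrable invOneAddSqSq := by
  simpa using integrable_mul_invOneAddSqSq continuous_const (a := fun _ => 1)
    fun t => by simp [sq_nonneg]

lemma integrable_abs_mul_invOneAddSqSq : Integrable fun t => |t| * invOneAddSqSq t :=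
  integrable_mul_invOneAddSqSq continuous_abs fun t => by
    rw [abs_abs]; nlinarith [sq_abs t, abs_nonneg t]

lemma sq_mul_invOneAddSqSq (t : ℝ) :
    t ^ 2 * invOneAddSqSq t = (1 + t ^ 2)⁻¹ - invOneAddSqSq t := by
  rw [← one_add_sq_mul_invOneAddSqSq]; ring

lemma integrable_sq_mul_invOneAddSqSq : Integrable fun t => t ^ 2 * invOneAddSqSq t :=
  integrable_mul_invOneAddSqSq (by fun_prop) fun t => by
    rw [abs_of_nonneg (sq_nonneg _)]; linarith

lemma tendsto_div_one_add_sq_atTop : Tendsto (fun t : ℝ => t / (1 + t ^ 2)) atTop (𝓝 0) := by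
  refine tendsto_of_tendsto_of_tendsto_of_le_of_le' tendsto_const_nhds tendsto_inv_atTop_zero
    ?_ ?_ <;> filter_upwards [eventually_gt_atTop 0] with t ht
  · positivity
  · rw [div_le_iff₀ (by positivity)]; field_simp; nlinarith

lemma integral_Ioi_invOneAddSqSq : ∫ t in Ioi 0, invOneAddSqSq t = π / 4 := by
  have hderiv (t : ℝ) : HasDerivAt (fun t => (arctan t + t / (1 + t ^ 2)) / 2)
      (invOneAddSqSq t) t := by
    have h := ((hasDerivAt_arctan t).add ((hasDerivAt_id t).div
      ((hasDerivAt_pow 2 t).const_add 1) (by positivity))).div_const 2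
    refine h.congr_deriv ?_
    unfold invOneAddSqSq; simp only [id]; field_simp; ring
  rw [integral_Ioi_of_hasDerivAt_of_tendsto' (fun t _ => hderiv t)
    integrable_invOneAddSqSq.integrableOn
    (((tendsto_arctan_atTop.mono_right nhdsWithin_le_nhds).add
      tendsto_div_one_add_sq_atTop).div_const 2)]
  norm_num; ring

lemma integral_Ioi_mul_invOneAddSqSq : ∫ t in Ioi 0, t * invOneAddSqSq t = 1 / 2 := by
  have hderiv (t : ℝ) : HasDerivAt (fun t => -(2 * (1 + t ^ 2))⁻¹) (t * invOneAddSqSq t) t := by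
    have h := ((((hasDerivAt_pow 2 t).const_add 1).const_mul 2).inv (by positivity)).neg
    refine h.congr_deriv ?_
    unfold invOneAddSqSq; field_simp; ring
  have hint : IntegrableOn (fun t => t * invOneAddSqSq t) (Ioi 0) :=
    integrable_abs_mul_invOneAddSqSq.integrableOn.congr_fun
      (fun t (ht : 0 < t) => by simp only [abs_of_pos ht]) measurableSet_Ioi
  have hlim : Tendsto (fun t : ℝ => -(2 * (1 + t ^ 2))⁻¹) atTop (𝓝 0) := by
    simpa using ((tendsto_atTop_add_const_left _ 1 (tendsto_pow_atTop two_ne_zero)).const_mul_atTop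
      (two_pos : (0 : ℝ) < 2)).inv_tendsto_atTop.neg
  rw [integral_Ioi_of_hasDerivAt_of_tendsto' (fun t _ => hderiv t) hint hlim]; norm_num

lemma integral_invOneAddSqSq : ∫ t, invOneAddSqSq t = π / 2 := by
  calc ∫ t, invOneAddSqSq t = ∫ t, invOneAddSqSq |t| := by simp only [invOneAddSqSq_abs]
    _ = π / 2 := by rw [integral_comp_abs, integral_Ioi_invOneAddSqSq]; ring

lemma integral_abs_mul_invOneAddSqSq : ∫ t, |t| * invOneAddSqSq t = 1 := by
  calc ∫ t, |t| * invOneAddSqSq t = ∫ t, |t| * invOneAddSqSq |t| := by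
        simp only [invOneAddSqSq_abs]
    _ = 1 := by
      rw [integral_comp_abs (f := fun t => t * invOneAddSqSq t), integral_Ioi_mul_invOneAddSqSq]
      norm_num

lemma integral_sq_mul_invOneAddSqSq : ∫ t, t ^ 2 * invOneAddSqSq t = π / 2 := by
  simp_rw [sq_mul_invOneAddSqSq]
  rw [integral_sub integrable_inv_one_add_sq integrable_invOneAddSqSq,
    integral_univ_inv_one_add_sq, integral_invOneAddSqSq]
  ring

lemma abs_sub_sq_mul_invOneAddSqSq (a t : ℝ) : (|t| - a) ^ 2 * invOneAddSqSq t =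
    t ^ 2 * invOneAddSqSq t - 2 * a * (|t| * invOneAddSqSq t) + a ^ 2 * invOneAddSqSq t := by
  rw [← sq_abs t]; ring

lemma integrable_abs_sub_mul_invOneAddSqSq (a : ℝ) :
    Integrable fun t => (|t| - a) * invOneAddSqSq t := by
  simp_rw [sub_mul]
  exact integrable_abs_mul_invOneAddSqSq.sub (integrable_invOneAddSqSq.const_mul a)

lemma integrable_abs_sub_sq_mul_invOneAddSqSq (a : ℝ) :
    Integrable fun t => (|t| - a) ^ 2 * invOneAddSqSq t := by
  simp_rw [abs_sub_sq_mul_invOneAddSqSq]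
  exact (integrable_sq_mul_invOneAddSqSq.sub (integrable_abs_mul_invOneAddSqSq.const_mul _)).add
    (integrable_invOneAddSqSq.const_mul _)

lemma integral_abs_sub_two_div_pi_mul_invOneAddSqSq :
    ∫ t, (|t| - 2 / π) * invOneAddSqSq t = 0 := by
  simp_rw [sub_mul]
  rw [integral_sub integrable_abs_mul_invOneAddSqSq (integrable_invOneAddSqSq.const_mul _),
    integral_const_mul, integral_abs_mul_invOneAddSqSq, integral_invOneAddSqSq]
  field_simp; ring

lemma integral_abs_sub_two_div_pi_sq_mul_invOneAddSqSq :
    ∫ t, (|t| - 2 / π) ^ 2 * invOneAddSqSq t = π / 2 - 2 / π := by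
  simp_rw [abs_sub_sq_mul_invOneAddSqSq]
  have hsq := integrable_sq_mul_invOneAddSqSq
  have habs := integrable_abs_mul_invOneAddSqSq.const_mul (2 * (2 / π))
  rw [integral_add (by fun_prop) (integrable_invOneAddSqSq.const_mul _), integral_sub hsq habs,
    integral_const_mul, integral_const_mul, integral_sq_mul_invOneAddSqSq,
    integral_abs_mul_invOneAddSqSq, integral_invOneAddSqSq]
  field_simp; ring

lemma sq_sum_mul_prod {ι E : Type*} [Fintype ι] [DecidableEq ι] (g f : E → ℝ) (u : ι → E) :
    (∑ j, g (u j)) ^ 2 * ∏ i, f (u i) =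
      ∑ j, ∑ k, ∏ i, (if i = j then g (u i) else 1) * (if i = k then g (u i) else 1) * f (u i) := by
  simp only [Finset.prod_mul_distrib, Finset.prod_ite_eq', Finset.mem_univ, if_true]
  rw [sq, Finset.sum_mul_sum, Finset.sum_mul]
  simp_rw [Finset.sum_mul]

section ProductWeight

variable {ι E : Type*} [MeasurableSpace E] {μ : Measure E} {f g : E → ℝ}

lemma integrable_ite_mul_ite_mul [DecidableEq ι] (hf : Integrable f μ)
    (hgf : Integrable (fun t => g t * f t) μ) (hg2f : Integrable (fun t => g t ^ 2 * f t) μ)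
    (j k i : ι) :
    Integrable (fun t => (if i = j then g t else 1) * (if i = k then g t else 1) * f t) μ := by
  split_ifs
  · simpa only [sq] using hg2f
  · simpa only [mul_one] using hgf
  · simpa only [one_mul] using hgf
  · simpa only [one_mul] using hf

lemma integrable_sq_sum_mul_prod [Fintype ι] [SigmaFinite μ] (hf : Integrable f μ)
    (hgf : Integrable (fun t => g t * f t) μ) (hg2f : Integrable (fun t => g t ^ 2 * f t) μ) :
    Integrable (fun u => (∑ j, g (u j)) ^ 2 * ∏ i, f (u i)) (Measure.pi fun _ : ι => μ) := by
  classical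
  simp_rw [sq_sum_mul_prod]
  exact integrable_finsetSum _ fun j _ => integrable_finsetSum _ fun k _ =>
    Integrable.fintype_prod (integrable_ite_mul_ite_mul hf hgf hg2f j k)

/-- The unnormalized form of `Var (∑ Xⱼ) = ∑ Var Xⱼ` for i.i.d. centered `Xⱼ = g(uⱼ)`. -/
lemma integral_sq_sum_mul_prod [Fintype ι] [SigmaFinite μ] (hf : Integrable f μ)
    (hgf : Integrable (fun t => g t * f t) μ) (hg2f : Integrable (fun t => g t ^ 2 * f t) μ)
    (hmean : ∫ t, g t * f t ∂μ = 0) :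
    ∫ u, (∑ j, g (u j)) ^ 2 * ∏ i, f (u i) ∂(Measure.pi fun _ : ι => μ) =
      Fintype.card ι * (∫ t, g t ^ 2 * f t ∂μ) * (∫ t, f t ∂μ) ^ (Fintype.card ι - 1) := by
  classical
  have hterm (j k : ι) :
      ∫ u, ∏ i, (if i = j then g (u i) else 1) * (if i = k then g (u i) else 1) * f (u i)
        ∂(Measure.pi fun _ : ι => μ) =
      if j = k then (∫ t, g t ^ 2 * f t ∂μ) * (∫ t, f t ∂μ) ^ (Fintype.card ι - 1) else 0 := by
    rw [integral_fintype_prod_eq_prod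
      (fun i t => (if i = j then g t else 1) * (if i = k then g t else 1) * f t)]
    split_ifs with hjk
    · subst hjk
      have hoff : ∀ i ∈ ({j}ᶜ : Finset ι),
          ∫ t, (if i = j then g t else 1) * (if i = j then g t else 1) * f t ∂μ = ∫ t, f t ∂μ :=
        fun i hi => by
          rw [Finset.mem_compl, Finset.mem_singleton] at hi
          simp [hi]
      rw [Fintype.prod_eq_mul_prod_compl j, Finset.prod_congr rfl hoff]
      simp [Finset.card_compl, sq]
    · exact Finset.prod_eq_zero (Finset.mem_univ j) (by simpa [hjk] using hmean)
  simp_rw [sq_sum_mul_prod]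
  rw [integral_finsetSum _ fun j _ => integrable_finsetSum _ fun k _ =>
    Integrable.fintype_prod (integrable_ite_mul_ite_mul hf hgf hg2f j k)]
  simp_rw [integral_finsetSum _ fun k _ =>
    Integrable.fintype_prod (integrable_ite_mul_ite_mul hf hgf hg2f _ k), hterm]
  simp only [Finset.sum_ite_eq, Finset.mem_univ, if_true, Finset.sum_const, Finset.card_univ,
    nsmul_eq_mul]
  ring

end ProductWeight

lemma setIntegral_le_integral_sq_mul_div_sq {X : Type*} [MeasurableSpace X] {μ : Measure X}
    {A : Set X} {P S : X → ℝ} {c : ℝ} (hc : 0 < c) (hP : 0 ≤ P)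
    (hSP : Integrable (fun x => S x ^ 2 * P x) μ) (hA : MeasurableSet A)
    (hS : ∀ x ∈ A, c ≤ S x) :
    ∫ x in A, P x ∂μ ≤ (∫ x, S x ^ 2 * P x ∂μ) / c ^ 2 := by
  have hpt : ∀ x ∈ A, P x ≤ S x ^ 2 * P x / c ^ 2 := fun x hx => by
    rw [le_div_iff₀ (by positivity), mul_comm]
    exact mul_le_mul_of_nonneg_right (pow_le_pow_left₀ hc.le (hS x hx) 2) (hP x)
  calc ∫ x in A, P x ∂μ ≤ ∫ x in A, S x ^ 2 * P x / c ^ 2 ∂μ :=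
        integral_mono_of_nonneg (ae_of_all _ hP) (hSP.integrableOn.div_const _)
          (ae_restrict_of_forall_mem hA hpt)
    _ = (∫ x in A, S x ^ 2 * P x ∂μ) / c ^ 2 := integral_div _ _
    _ ≤ (∫ x, S x ^ 2 * P x ∂μ) / c ^ 2 := div_le_div_of_nonneg_right
      (setIntegral_le_integral hSP (ae_of_all _ fun x => mul_nonneg (sq_nonneg _) (hP x)))
      (sq_nonneg c)

lemma setIntegral_sum_abs_gt_prod_invOneAddSqSq_le {ι : Type*} [Fintype ι] [Nonempty ι] :
    ∫ u in {u : ι → ℝ | 2 * Fintype.card ι < ∑ j, |u j|}, ∏ j, invOneAddSqSq (u j) ≤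
      (π / 2) ^ Fintype.card ι / Fintype.card ι := by
  have hsecond := integral_sq_sum_mul_prod (ι := ι) integrable_invOneAddSqSq
    (integrable_abs_sub_mul_invOneAddSqSq _) (integrable_abs_sub_sq_mul_invOneAddSqSq _)
    integral_abs_sub_two_div_pi_mul_invOneAddSqSq
  rw [integral_abs_sub_two_div_pi_sq_mul_invOneAddSqSq, integral_invOneAddSqSq] at hsecond
  set n := Fintype.card ι
  have hn : (0 : ℝ) < n := by exact_mod_cast Fintype.card_pos
  have hs : 0 < 2 - 2 / π := by rw [sub_pos, div_lt_iff₀ pi_pos]; linarith [pi_gt_three]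
  have hS : ∀ u ∈ {u : ι → ℝ | 2 * n < ∑ j, |u j|}, n * (2 - 2 / π) ≤ ∑ j, (|u j| - 2 / π) := by
    intro u (hu : 2 * (n : ℝ) < _)
    rw [Finset.sum_sub_distrib, Finset.sum_const, Finset.card_univ, nsmul_eq_mul]
    linarith
  have hvar : π / 2 - 2 / π ≤ (2 - 2 / π) ^ 2 * (π / 2) := by
    have h : (2 - 2 / π) ^ 2 * (π / 2) = 2 * π - 4 + 2 / π := by field_simp; ring
    rw [h]; linarith [pi_gt_three, div_pos two_pos pi_pos]
  have hpow : (π / 2) ^ n = (π / 2) ^ (n - 1) * (π / 2) := by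
    rw [← pow_succ, Nat.sub_add_cancel Fintype.card_pos]
  rw [volume_pi]
  calc _ ≤ _ := setIntegral_le_integral_sq_mul_div_sq (by positivity)
        (fun u => Finset.prod_nonneg fun j _ => invOneAddSqSq_nonneg (u j))
        (integrable_sq_sum_mul_prod integrable_invOneAddSqSq
          (integrable_abs_sub_mul_invOneAddSqSq _) (integrable_abs_sub_sq_mul_invOneAddSqSq _))
        (measurableSet_lt measurable_const (by fun_prop)) hS
    _ = (π / 2 - 2 / π) * (π / 2) ^ (n - 1) / (n * (2 - 2 / π) ^ 2) := by
      rw [hsecond]; field_simp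
    _ ≤ (π / 2) ^ n / n := by
      rw [hpow, div_le_div_iff₀ (by positivity) hn]
      nlinarith [mul_le_mul_of_nonneg_left hvar (by positivity : 0 ≤ (π / 2) ^ (n - 1) * n)]

/-- For every integer `M ≥ 2`,
`∫_{‖u‖₁ ≤ 2M} ∏_j (1 + u_j²)^{-2} du ≥ (1 − 1/M)·(π/2)^M`. -/
theorem normalizing_constant_lower_bound (M : ℕ) (hM : 2 ≤ M) :
    (1 - 1 / (M : ℝ)) * (Real.pi / 2) ^ M ≤
      ∫ u in {u : Fin M → ℝ | (∑ j, |u j|) ≤ 2 * M}, ∏ j, ((1 + u j ^ 2) ^ 2)⁻¹ := by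
  have : Nonempty (Fin M) := ⟨⟨0, by omega⟩⟩
  have hP : Integrable fun u : Fin M → ℝ => ∏ j, invOneAddSqSq (u j) :=
    Integrable.fintype_prod fun _ => integrable_invOneAddSqSq
  have hcompl : {u : Fin M → ℝ | (∑ j, |u j|) ≤ 2 * M}ᶜ =
      {u : Fin M → ℝ | 2 * (M : ℝ) < ∑ j, |u j|} := by
    ext; simp
  have htotal := integral_add_compl (s := {u : Fin M → ℝ | (∑ j, |u j|) ≤ 2 * M})
    (by exact measurableSet_le (by fun_prop) measurable_const) hP
  rw [hcompl, integral_fintype_prod_volume_eq_pow, integral_invOneAddSqSq,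
    Fintype.card_fin] at htotal
  have htail := setIntegral_sum_abs_gt_prod_invOneAddSqSq_le (ι := Fin M)
  rw [Fintype.card_fin] at htail
  change _ ≤ ∫ u in _, ∏ j, invOneAddSqSq ((u : Fin M → ℝ) j)
  linarith [show (1 - 1 / (M : ℝ)) * (π / 2) ^ M = (π / 2) ^ M - (π / 2) ^ M / M by ring]
end
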